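/- arXiv:1810.05412 — 13 statements merged into one kernel-verified Lean document; each statement's English description precedes it below -/
import Mathlib

section
/- Let E be a real Banach space, let e : ℝ → E be continuous, let s, ζ ∈ ℝ with ζ ≥ 0, and let n ∈ ℕ. Then ∫₀^ζ ξⁿ ( ∫₀^ξ ( e(s+ξ) − e(s+χ) ) dχ ) dξ = (1/(n+1)) ∫₀^ζ ( (n+2) ξ^{n+1} − ζ^{n+1} ) e(s+ξ) dξ. -/
/-!
Write `g χ = e (s + χ)` and `G ξ = ∫₀^ξ g`. The inner integral is `ξ g(ξ) - G(ξ)`, and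
integrating `ξ^(n+1) g` by parts against the antiderivative `G` gives
`(n + 1) ∫₀^ζ ξ^n G(ξ) dξ = ζ^(n+1) G(ζ) - ∫₀^ζ ξ^(n+1) g(ξ) dξ`;
the identity is a linear combination of these two facts.
-/

open intervalIntegral

section

variable {E : Type*} [NormedAddCommGroup E] [NormedSpace ℝ E] [CompleteSpace E] {g : ℝ → E}

theorem integral_pow_smul_integral (hg : Continuous g) (a b : ℝ) (n : ℕ) :
    (n + 1 : ℝ) • ∫ ξ in a..b, ξ ^ n • ∫ χ in a..ξ, g χ
      = b ^ (n + 1) • (∫ χ in a..b, g χ) - ∫ ξ in a..b, ξ ^ (n + 1) • g ξ := by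
  have hG : ∀ ξ, HasDerivAt (fun ξ ↦ ∫ χ in a..ξ, g χ) (g ξ) ξ :=
    fun ξ ↦ hg.integral_hasStrictDerivAt a ξ |>.hasDerivAt
  have hpow : ∀ ξ : ℝ, HasDerivAt (· ^ (n + 1)) ((n + 1 : ℝ) * ξ ^ n) ξ := by
    intro ξ
    simpa using hasDerivAt_pow (n + 1) ξ
  have hparts := integral_smul_deriv_eq_deriv_smul (fun ξ _ ↦ hpow ξ) (fun ξ _ ↦ hG ξ)
    ((by fun_prop : Continuous fun ξ : ℝ ↦ (n + 1 : ℝ) * ξ ^ n).intervalIntegrable _ _)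
    (hg.intervalIntegrable a b)
  simp only [integral_same, smul_zero, sub_zero, mul_smul] at hparts
  rw [← integral_smul, hparts, sub_sub_cancel]

theorem integral_pow_smul_integral_sub (hg : Continuous g) (ζ : ℝ) (n : ℕ) :
    (∫ ξ in 0..ζ, ξ ^ n • ∫ χ in 0..ξ, (g ξ - g χ))
      = (1 / (n + 1 : ℝ)) •
          ∫ ξ in 0..ζ, (((n : ℝ) + 2) * ξ ^ (n + 1) - ζ ^ (n + 1)) • g ξ := by
  have hG : Continuous fun ξ ↦ ∫ χ in 0..ξ, g χ := continuous_primitive hg.intervalIntegrable 0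
  have hinner : ∀ ξ : ℝ, ∫ χ in 0..ξ, (g ξ - g χ) = ξ • g ξ - ∫ χ in 0..ξ, g χ := fun ξ ↦ by
    rw [integral_sub intervalIntegrable_const (hg.intervalIntegrable _ _), integral_const,
      sub_zero]
  have hlhs : (∫ ξ in 0..ζ, ξ ^ n • ∫ χ in 0..ξ, (g ξ - g χ))
      = (∫ ξ in 0..ζ, ξ ^ (n + 1) • g ξ) - ∫ ξ in 0..ζ, ξ ^ n • ∫ χ in 0..ξ, g χ := by
    simp only [hinner, smul_sub, smul_smul, ← pow_succ]
    exact integral_sub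
      ((by fun_prop : Continuous fun ξ : ℝ ↦ ξ ^ (n + 1) • g ξ).intervalIntegrable _ _)
      ((by fun_prop : Continuous fun ξ : ℝ ↦ ξ ^ n • ∫ χ in 0..ξ, g χ).intervalIntegrable _ _)
  have hrhs : (∫ ξ in 0..ζ, (((n : ℝ) + 2) * ξ ^ (n + 1) - ζ ^ (n + 1)) • g ξ)
      = ((n : ℝ) + 2) • (∫ ξ in 0..ζ, ξ ^ (n + 1) • g ξ) - ζ ^ (n + 1) • ∫ ξ in 0..ζ, g ξ := by
    simp only [sub_smul, mul_smul]
    rw [integral_sub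
      ((by fun_prop : Continuous fun ξ : ℝ ↦ ((n : ℝ) + 2) • ξ ^ (n + 1) • g ξ).intervalIntegrable
        _ _)
      ((by fun_prop : Continuous fun ξ : ℝ ↦ ζ ^ (n + 1) • g ξ).intervalIntegrable _ _),
      integral_smul, integral_smul]
  rw [hlhs, hrhs]
  linear_combination (norm := match_scalars <;> field_simp <;> ring)
    (-1 / (n + 1 : ℝ)) • integral_pow_smul_integral hg 0 ζ n

end

theorem ibp_identity_3_general {E : Type*} [NormedAddCommGroup E] [NormedSpace ℝ E] [CompleteSpace E]
    (e : ℝ → E) (he : Continuous e) (s ζ : ℝ) (n : ℕ) :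
    (∫ ξ in (0:ℝ)..ζ, ξ ^ n • ∫ χ in (0:ℝ)..ξ, (e (s + ξ) - e (s + χ)))
      = (1 / (n + 1 : ℝ)) •
          ∫ ξ in (0:ℝ)..ζ, (((n : ℝ) + 2) * ξ ^ (n + 1) - ζ ^ (n + 1)) • e (s + ξ) :=
  integral_pow_smul_integral_sub (he.comp (continuous_const_add s)) ζ n

theorem ibp_identity_3 {E : Type*} [NormedAddCommGroup E] [NormedSpace ℝ E] [CompleteSpace E]
    (e : ℝ → E) (he : Continuous e) (s ζ : ℝ) (hζ : 0 ≤ ζ) (n : ℕ) :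
    (∫ ξ in (0:ℝ)..ζ, ξ ^ n • ∫ χ in (0:ℝ)..ξ, (e (s + ξ) - e (s + χ)))
      = (1 / (n + 1 : ℝ)) •
          ∫ ξ in (0:ℝ)..ζ, (((n : ℝ) + 2) * ξ ^ (n + 1) - ζ ^ (n + 1)) • e (s + ξ) :=
  ibp_identity_3_general e he s ζ n
end

section
/- Let n ≥ 1, let ε be a nonzero real number, let V₀ : ℝⁿ → ℝ be smooth, let e : ℝ → ℝⁿ be any function, and for s ∈ ℝ define the operator 𝒜(s) on smooth functions u : ℝⁿ → ℂ by (𝒜(s)u)(x) = iε Δu(x) − i ε⁻¹ (V₀(x) + ⟨e(s), x⟩) u(x). Then for all ξ, χ, ζ ∈ ℝ, every smooth u : ℝⁿ → ℂ and every x ∈ ℝⁿ, the nested commutator satisfies ( [𝒜(ξ), [𝒜(χ), 𝒜(ζ)]] u )(x) = 2 i ε⁻¹ ⟨ e(ζ) − e(χ), ∇V₀(x) + e(ξ) ⟩ u(x). -/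
open scoped RealInnerProductSpace

/-- The Laplacian of `u`, `Δu(x) = ∑ j, ∂²u/∂x_j²(x)`. -/
noncomputable def laplacian {n : ℕ} (u : EuclideanSpace ℝ (Fin n) → ℂ)
    (x : EuclideanSpace ℝ (Fin n)) : ℂ :=
  ∑ j : Fin n, fderiv ℝ (fun y => fderiv ℝ u y (EuclideanSpace.single j 1)) x
    (EuclideanSpace.single j 1)

/-- The operator `𝒜(s)u = iε Δu − i ε⁻¹ (V₀ + ⟨e(s), ·⟩) u`. -/
noncomputable def opA {n : ℕ} (ε : ℝ) (V₀ : EuclideanSpace ℝ (Fin n) → ℝ)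
    (e : ℝ → EuclideanSpace ℝ (Fin n)) (s : ℝ)
    (u : EuclideanSpace ℝ (Fin n) → ℂ) : EuclideanSpace ℝ (Fin n) → ℂ :=
  fun x => Complex.I * (ε : ℂ) * laplacian u x
    - Complex.I * (ε : ℂ)⁻¹ * ((V₀ x : ℂ) + (⟪e s, x⟫ : ℂ)) * u x

namespace CG3
open scoped ContDiff

variable {n : ℕ}
local notation "E" => EuclideanSpace ℝ (Fin n)

/-- directional derivative -/
noncomputable def D (v : E) (f : E → ℂ) : E → ℂ := fun y => fderiv ℝ f y v

/-- basis vectors -/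
noncomputable def eb (j : Fin n) : E := EuclideanSpace.single j (1:ℝ)

abbrev Sm (f : E → ℂ) : Prop := ContDiff ℝ ∞ f

private lemma hle {m : ℕ∞} : (m : WithTop ℕ∞) ≤ ∞ := WithTop.coe_le_coe.mpr le_top

lemma Sm.D {f : E → ℂ} (hf : Sm f) (v : E) : Sm (CG3.D v f) :=
  (ContinuousLinearMap.apply ℝ ℂ v).contDiff.comp (hf.fderiv_right hle)

lemma Sm.diff {f : E → ℂ} (hf : Sm f) : Differentiable ℝ f :=
  hf.differentiable (by simp)

lemma D_add {f g : E → ℂ} (hf : Sm f) (hg : Sm g) (v : E) (x : E) :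
    D v (fun y => f y + g y) x = D v f x + D v g x := by
  simp [CG3.D, fderiv_fun_add (hf.diff x) (hg.diff x)]

lemma D_sub {f g : E → ℂ} (hf : Sm f) (hg : Sm g) (v : E) (x : E) :
    D v (fun y => f y - g y) x = D v f x - D v g x := by
  simp [CG3.D, fderiv_fun_sub (hf.diff x) (hg.diff x)]

lemma D_const_mul {f : E → ℂ} (hf : Sm f) (c : ℂ) (v : E) (x : E) :
    D v (fun y => c * f y) x = c * D v f x := by
  simp [CG3.D, fderiv_const_mul (hf.diff x) c]

lemma D_mul {f g : E → ℂ} (hf : Sm f) (hg : Sm g) (v : E) (x : E) :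
    D v (fun y => f y * g y) x = D v f x * g x + f x * D v g x := by
  simp [CG3.D, fderiv_fun_mul (hf.diff x) (hg.diff x)]; ring

lemma D_swap {f : E → ℂ} (hf : Sm f) (v w : E) (x : E) :
    D v (D w f) x = D w (D v f) x := by
  have hs := (hf.contDiffAt (x := x)).isSymmSndFDerivAt (by simp [minSmoothness_of_isRCLikeNormedField]; exact WithTop.coe_le_coe.mpr le_top)
  have hd : DifferentiableAt ℝ (fderiv ℝ f) x :=
    (hf.fderiv_right (m := 1) (WithTop.coe_le_coe.mpr le_top)).differentiable (by simp) x
  have key : ∀ a b : E, D a (D b f) x = fderiv ℝ (fderiv ℝ f) x a b := by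
    intro a b
    show fderiv ℝ (fun y => (ContinuousLinearMap.apply ℝ ℂ b) (fderiv ℝ f y)) x a = _
    rw [fderiv_comp' x (ContinuousLinearMap.apply ℝ ℂ b).differentiableAt hd]
    simp
  rw [key, key, hs]

lemma lap_apply (u : E → ℂ) (x : E) :
    laplacian u x = ∑ j : Fin n, D (eb j) (D (eb j) u) x := rfl

lemma Sm.lap {u : E → ℂ} (hu : Sm u) : Sm (laplacian u) := by
  have : laplacian u = fun x => ∑ j : Fin n, CG3.D (eb j) (CG3.D (eb j) u) x := rfl
  rw [this]
  exact ContDiff.sum fun j _ => Sm.D (Sm.D hu _) _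

lemma lap_sub {f g : E → ℂ} (hf : Sm f) (hg : Sm g) (x : E) :
    laplacian (fun y => f y - g y) x = laplacian f x - laplacian g x := by
  have h : ∀ j : Fin n, D (eb j) (D (eb j) (fun y => f y - g y)) x
      = D (eb j) (D (eb j) f) x - D (eb j) (D (eb j) g) x := by
    intro j
    have h1 : D (eb j) (fun y => f y - g y) = fun y => D (eb j) f y - D (eb j) g y :=
      funext fun y => D_sub hf hg _ y
    rw [h1, D_sub (Sm.D hf _) (Sm.D hg _)]
  rw [lap_apply, lap_apply, lap_apply, ← Finset.sum_sub_distrib]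
  exact Finset.sum_congr rfl fun j _ => h j

lemma lap_const_mul {f : E → ℂ} (hf : Sm f) (c : ℂ) (x : E) :
    laplacian (fun y => c * f y) x = c * laplacian f x := by
  have h : ∀ j : Fin n, D (eb j) (D (eb j) (fun y => c * f y)) x
      = c * D (eb j) (D (eb j) f) x := by
    intro j
    have h1 : D (eb j) (fun y => c * f y) = fun y => c * D (eb j) f y :=
      funext fun y => D_const_mul hf c _ y
    rw [h1, D_const_mul (Sm.D hf _)]
  rw [lap_apply, lap_apply, Finset.mul_sum]
  exact Finset.sum_congr rfl fun j _ => h j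

lemma lap_mul {f g : E → ℂ} (hf : Sm f) (hg : Sm g) (x : E) :
    laplacian (fun y => f y * g y) x
      = laplacian f x * g x + 2 * ∑ j : Fin n, D (eb j) f x * D (eb j) g x
        + f x * laplacian g x := by
  have h : ∀ j : Fin n, D (eb j) (D (eb j) (fun y => f y * g y)) x
      = D (eb j) (D (eb j) f) x * g x + 2 * (D (eb j) f x * D (eb j) g x)
        + f x * D (eb j) (D (eb j) g) x := by
    intro j
    have h1 : D (eb j) (fun y => f y * g y)
        = fun y => D (eb j) f y * g y + f y * D (eb j) g y :=
      funext fun y => D_mul hf hg _ y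
    rw [h1, D_add ((Sm.D hf _).mul hg) (hf.mul (Sm.D hg _)),
      D_mul (Sm.D hf _) hg, D_mul hf (Sm.D hg _)]
    ring
  rw [lap_apply, lap_apply, lap_apply]
  rw [show (∑ j : Fin n, D (eb j) (D (eb j) f) x) * g x
        + 2 * ∑ j : Fin n, D (eb j) f x * D (eb j) g x
        + f x * ∑ j : Fin n, D (eb j) (D (eb j) g) x
      = ∑ j : Fin n, (D (eb j) (D (eb j) f) x * g x + 2 * (D (eb j) f x * D (eb j) g x)
        + f x * D (eb j) (D (eb j) g) x) by
    rw [Finset.sum_add_distrib, Finset.sum_add_distrib, Finset.sum_mul, Finset.mul_sum,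
      Finset.mul_sum]]
  exact Finset.sum_congr rfl fun j _ => h j

lemma lap_D {u : E → ℂ} (hu : Sm u) (a : E) (x : E) :
    laplacian (D a u) x = D a (laplacian u) x := by
  have h : ∀ j : Fin n, D (eb j) (D (eb j) (D a u)) x
      = D a (fun y => D (eb j) (D (eb j) u) y) x := by
    intro j
    have h1 : D (eb j) (D a u) = D a (D (eb j) u) :=
      funext fun y => D_swap hu _ _ y
    rw [h1, D_swap (Sm.D hu (eb j)) (eb j) a x]
  rw [lap_apply]
  rw [show D a (laplacian u) x
      = ∑ j : Fin n, D a (fun y => D (eb j) (D (eb j) u) y) x by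
    show fderiv ℝ (laplacian u) x a = _
    have h2 : laplacian u = fun y => ∑ j : Fin n, D (eb j) (D (eb j) u) y := rfl
    rw [h2, fderiv_fun_sum fun j _ => ((Sm.diff (Sm.D (Sm.D hu _) _)) x),
      ContinuousLinearMap.sum_apply]
    rfl]
  exact Finset.sum_congr rfl fun j _ => h j

lemma fderiv_expand (v : E → ℂ) (x : E) (a : E) :
    fderiv ℝ v x a = ∑ j : Fin n, ((a j : ℝ) : ℂ) * fderiv ℝ v x (eb j) := by
  have ha : a = ∑ j : Fin n, a j • eb j := by
    have := (EuclideanSpace.basisFun (Fin n) ℝ).sum_repr a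
    simpa [CG3.eb, EuclideanSpace.basisFun_apply, EuclideanSpace.basisFun_repr] using this.symm
  conv_lhs => rw [ha]
  rw [map_sum]
  exact Finset.sum_congr rfl fun j _ => by rw [map_smul]; simp [Complex.real_smul]



section W

variable (ε : ℝ) (V₀ : EuclideanSpace ℝ (Fin n) → ℝ) (e : ℝ → EuclideanSpace ℝ (Fin n))

noncomputable def Wc (s : ℝ) : E → ℂ := fun y => (V₀ y : ℂ) + (⟪e s, y⟫ : ℂ)

variable {V₀}

lemma Sm_Wc (hV : ContDiff ℝ ∞ V₀) (s : ℝ) : Sm (Wc V₀ e s) := by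
  apply ContDiff.add
  · exact Complex.ofRealCLM.contDiff.comp hV
  · exact Complex.ofRealCLM.contDiff.comp
      (ContDiff.inner (𝕜 := ℝ) contDiff_const contDiff_id)

lemma D_Wc (hV : ContDiff ℝ ∞ V₀) (s : ℝ) (v y : E) :
    D v (Wc V₀ e s) y = ((fderiv ℝ V₀ y v : ℝ) : ℂ) + ((⟪e s, v⟫ : ℝ) : ℂ) := by
  have h1 : HasFDerivAt (fun y : E => ((V₀ y : ℝ) : ℂ))
      (Complex.ofRealCLM.comp (fderiv ℝ V₀ y)) y :=
    Complex.ofRealCLM.hasFDerivAt.comp y ((hV.differentiable (by simp) y).hasFDerivAt)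
  have h2 : HasFDerivAt (fun y : E => ((⟪e s, y⟫ : ℝ) : ℂ))
      (Complex.ofRealCLM.comp (innerSL ℝ (e s))) y :=
    (Complex.ofRealCLM.comp (innerSL ℝ (e s))).hasFDerivAt
  have h3 := (h1.add h2).fderiv
  show fderiv ℝ (Wc V₀ e s) y v = _
  rw [show Wc V₀ e s = (fun y : E => ((V₀ y : ℝ) : ℂ)) + (fun y : E => ((⟪e s, y⟫ : ℝ) : ℂ)) from rfl, h3]
  simp

lemma lap_Wc_eq (hV : ContDiff ℝ ∞ V₀) (σ τ : ℝ) (x : E) :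
    laplacian (Wc V₀ e σ) x = laplacian (Wc V₀ e τ) x := by
  rw [lap_apply, lap_apply]
  refine Finset.sum_congr rfl fun j _ => ?_
  have h1 : ∀ s : ℝ, D (eb j) (Wc V₀ e s)
      = fun y => ((fderiv ℝ V₀ y (eb j) : ℝ) : ℂ) + ((⟪e s, eb j⟫ : ℝ) : ℂ) :=
    fun s => funext fun y => D_Wc e hV s (eb j) y
  rw [h1, h1]
  show fderiv ℝ _ x (eb j) = fderiv ℝ _ x (eb j)
  rw [fderiv_add_const, fderiv_add_const]

lemma opA_apply (s : ℝ) (u : E → ℂ) (x : E) :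
    opA ε V₀ e s u x = Complex.I * (ε : ℂ) * laplacian u x
      - Complex.I * (ε : ℂ)⁻¹ * Wc V₀ e s x * u x := rfl

lemma Sm_opA (hV : ContDiff ℝ ∞ V₀) {u : E → ℂ} (hu : Sm u) (s : ℝ) :
    Sm (opA ε V₀ e s u) :=
  (contDiff_const.mul (Sm.lap hu)).sub
    (((contDiff_const.mul (Sm_Wc e hV s)).mul hu))

lemma opA_sub (s : ℝ) {f g : E → ℂ} (hf : Sm f) (hg : Sm g) (x : E) :
    opA ε V₀ e s f x - opA ε V₀ e s g x = opA ε V₀ e s (fun y => f y - g y) x := by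
  rw [opA_apply, opA_apply, opA_apply, lap_sub hf hg]
  ring

lemma comm_inner (hε : ε ≠ 0) (hV : ContDiff ℝ ∞ V₀) {v : E → ℂ} (hv : Sm v)
    (σ τ : ℝ) (x : E) :
    opA ε V₀ e σ (opA ε V₀ e τ v) x - opA ε V₀ e τ (opA ε V₀ e σ v) x
      = 2 * fderiv ℝ v x (e τ - e σ) := by
  have h0 : (ε : ℂ) ≠ 0 := Complex.ofReal_ne_zero.mpr hε
  have hcd : Complex.I * (ε : ℂ) * (Complex.I * (ε : ℂ)⁻¹) = -1 := by
    rw [mul_mul_mul_comm, Complex.I_mul_I, mul_inv_cancel₀ h0]; ring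
  have hW : ∀ s : ℝ, Sm (Wc V₀ e s) := Sm_Wc e hV
  have key : ∀ s t : ℝ, opA ε V₀ e s (opA ε V₀ e t v) x
      = (Complex.I * ε) * ((Complex.I * ε) * laplacian (laplacian v) x
          - (Complex.I * (ε : ℂ)⁻¹) * (laplacian (Wc V₀ e t) x * v x
            + 2 * ∑ j : Fin n, D (eb j) (Wc V₀ e t) x * D (eb j) v x
            + Wc V₀ e t x * laplacian v x))
        - (Complex.I * (ε : ℂ)⁻¹) * (Wc V₀ e s x
            * ((Complex.I * ε) * laplacian v x
              - (Complex.I * (ε : ℂ)⁻¹) * (Wc V₀ e t x * v x))) := by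
    intro s t
    have hrep : opA ε V₀ e t v = fun y => (Complex.I * ε) * laplacian v y
        - (Complex.I * (ε : ℂ)⁻¹) * (Wc V₀ e t y * v y) :=
      funext fun y => by rw [opA_apply]; ring
    rw [opA_apply, hrep,
      lap_sub (contDiff_const.mul (Sm.lap hv)) (contDiff_const.mul ((hW t).mul hv)),
      lap_const_mul (Sm.lap hv), lap_const_mul ((hW t).mul hv), lap_mul (hW t) hv]
    beta_reduce
    ring
  rw [key, key, lap_Wc_eq e hV σ τ x]
  have hS : (∑ j : Fin n, D (eb j) (Wc V₀ e τ) x * D (eb j) v x)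
      - (∑ j : Fin n, D (eb j) (Wc V₀ e σ) x * D (eb j) v x)
      = fderiv ℝ v x (e τ - e σ) := by
    rw [← Finset.sum_sub_distrib, fderiv_expand v x (e τ - e σ)]
    refine Finset.sum_congr rfl fun j _ => ?_
    rw [D_Wc e hV τ, D_Wc e hV σ]
    have h1 : ∀ s : ℝ, (⟪e s, eb j⟫ : ℝ) = e s j := by
      intro s
      rw [show eb j = EuclideanSpace.single j ((1:ℝ):ℝ) from rfl,
        EuclideanSpace.inner_single_right]
      simp
    have h2 : (e τ - e σ) j = e τ j - e σ j := rfl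
    rw [h1, h1, h2]
    push_cast
    show _ = _ * D (eb j) v x
    ring
  rw [← hS]
  linear_combination (-(2 * ((∑ j : Fin n, D (eb j) (Wc V₀ e τ) x * D (eb j) v x)
      - ∑ j : Fin n, D (eb j) (Wc V₀ e σ) x * D (eb j) v x))) * hcd

lemma comm_outer (hV : ContDiff ℝ ∞ V₀) {v : E → ℂ} (hv : Sm v)
    (ξ : ℝ) (a : E) (x : E) :
    opA ε V₀ e ξ (fun y => 2 * fderiv ℝ v y a) x - 2 * fderiv ℝ (opA ε V₀ e ξ v) x a
      = 2 * Complex.I * (ε : ℂ)⁻¹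
        * (((fderiv ℝ V₀ x a : ℝ) : ℂ) + ((⟪e ξ, a⟫ : ℝ) : ℂ)) * v x := by
  have hW : Sm (Wc V₀ e ξ) := Sm_Wc e hV ξ
  have hDa : Sm (D a v) := Sm.D hv a
  have h1 : opA ε V₀ e ξ (fun y => 2 * fderiv ℝ v y a) x
      = Complex.I * ε * (2 * D a (laplacian v) x)
        - Complex.I * (ε : ℂ)⁻¹ * Wc V₀ e ξ x * (2 * D a v x) := by
    rw [show (fun y => 2 * fderiv ℝ v y a) = fun y => (2:ℂ) * D a v y from rfl,
      opA_apply, lap_const_mul hDa, lap_D hv]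
  have hrep : opA ε V₀ e ξ v = fun y => (Complex.I * ε) * laplacian v y
      - (Complex.I * (ε : ℂ)⁻¹) * (Wc V₀ e ξ y * v y) :=
    funext fun y => by rw [opA_apply]; ring
  have h2 : fderiv ℝ (opA ε V₀ e ξ v) x a
      = (Complex.I * ε) * D a (laplacian v) x
        - (Complex.I * (ε : ℂ)⁻¹) * ((((fderiv ℝ V₀ x a : ℝ) : ℂ)
            + ((⟪e ξ, a⟫ : ℝ) : ℂ)) * v x + Wc V₀ e ξ x * D a v x) := by
    show D a (opA ε V₀ e ξ v) x = _
    rw [hrep, D_sub (contDiff_const.mul (Sm.lap hv)) (contDiff_const.mul (hW.mul hv)),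
      D_const_mul (Sm.lap hv), D_const_mul (hW.mul hv), D_mul hW hv, D_Wc e hV ξ a x]
  rw [h1, h2]
  ring

end W

end CG3

theorem commutator_grade3 (n : ℕ) (hn : 1 ≤ n) (ε : ℝ) (hε : ε ≠ 0)
    (V₀ : EuclideanSpace ℝ (Fin n) → ℝ) (hV : ContDiff ℝ (⊤ : ℕ∞) V₀)
    (e : ℝ → EuclideanSpace ℝ (Fin n)) (ξ χ ζ : ℝ)
    (u : EuclideanSpace ℝ (Fin n) → ℂ) (hu : ContDiff ℝ (⊤ : ℕ∞) u)
    (x : EuclideanSpace ℝ (Fin n)) :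
    opA ε V₀ e ξ (opA ε V₀ e χ (opA ε V₀ e ζ u)) x
        - opA ε V₀ e ξ (opA ε V₀ e ζ (opA ε V₀ e χ u)) x
        - opA ε V₀ e χ (opA ε V₀ e ζ (opA ε V₀ e ξ u)) x
        + opA ε V₀ e ζ (opA ε V₀ e χ (opA ε V₀ e ξ u)) x
      = 2 * Complex.I * (ε : ℂ)⁻¹ *
          (⟪e ζ - e χ, gradient V₀ x + e ξ⟫ : ℂ) * u x := by
  have hV' : ContDiff ℝ ((⊤ : ℕ∞) : WithTop ℕ∞) V₀ := hV.of_le (by simp)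
  have hu' : ContDiff ℝ ((⊤ : ℕ∞) : WithTop ℕ∞) u := hu.of_le (by simp)
  have h1 := CG3.opA_sub ε (V₀ := V₀) e ξ
    (CG3.Sm_opA ε e hV' (CG3.Sm_opA ε e hV' hu' ζ) χ)
    (CG3.Sm_opA ε e hV' (CG3.Sm_opA ε e hV' hu' χ) ζ) x
  have h2 : (fun y => opA ε V₀ e χ (opA ε V₀ e ζ u) y - opA ε V₀ e ζ (opA ε V₀ e χ u) y)
      = fun y => 2 * fderiv ℝ u y (e ζ - e χ) :=
    funext fun y => CG3.comm_inner ε e hε hV' hu' χ ζ y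
  have h3 := CG3.comm_inner ε e hε hV' (CG3.Sm_opA ε e hV' hu' ξ) χ ζ x
  have h4 := CG3.comm_outer ε e hV' hu' ξ (e ζ - e χ) x
  have hg : (⟪e ζ - e χ, gradient V₀ x + e ξ⟫ : ℝ)
      = fderiv ℝ V₀ x (e ζ - e χ) + ⟪e ξ, e ζ - e χ⟫ := by
    have hgrad : (⟪gradient V₀ x, e ζ - e χ⟫ : ℝ) = fderiv ℝ V₀ x (e ζ - e χ) :=
      InnerProductSpace.toDual_symm_apply
    rw [inner_add_right, real_inner_comm (gradient V₀ x) (e ζ - e χ), hgrad,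
      real_inner_comm (e ξ) (e ζ - e χ)]
  calc opA ε V₀ e ξ (opA ε V₀ e χ (opA ε V₀ e ζ u)) x
        - opA ε V₀ e ξ (opA ε V₀ e ζ (opA ε V₀ e χ u)) x
        - opA ε V₀ e χ (opA ε V₀ e ζ (opA ε V₀ e ξ u)) x
        + opA ε V₀ e ζ (opA ε V₀ e χ (opA ε V₀ e ξ u)) x
      = (opA ε V₀ e ξ (opA ε V₀ e χ (opA ε V₀ e ζ u)) x
          - opA ε V₀ e ξ (opA ε V₀ e ζ (opA ε V₀ e χ u)) x)
        - (opA ε V₀ e χ (opA ε V₀ e ζ (opA ε V₀ e ξ u)) x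
          - opA ε V₀ e ζ (opA ε V₀ e χ (opA ε V₀ e ξ u)) x) := by ring
    _ = opA ε V₀ e ξ (fun y => 2 * fderiv ℝ u y (e ζ - e χ)) x
        - 2 * fderiv ℝ (opA ε V₀ e ξ u) x (e ζ - e χ) := by rw [h1, h2, h3]
    _ = 2 * Complex.I * (ε : ℂ)⁻¹
        * (((fderiv ℝ V₀ x (e ζ - e χ) : ℝ) : ℂ) + ((⟪e ξ, e ζ - e χ⟫ : ℝ) : ℂ)) * u x := h4
    _ = 2 * Complex.I * (ε : ℂ)⁻¹ * (⟪e ζ - e χ, gradient V₀ x + e ξ⟫ : ℂ) * u x := by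
        rw [hg]; push_cast; ring
end

section
/- Let n ≥ 1, let ε be a nonzero real number, let V₀ : ℝⁿ → ℝ be smooth, let e : ℝ → ℝⁿ be any function, and for s ∈ ℝ define the operator 𝒜(s) on smooth functions u : ℝⁿ → ℂ by (𝒜(s)u)(x) = iε Δu(x) − i ε⁻¹ (V₀(x) + ⟨e(s), x⟩) u(x). Then for all ν, χ, ξ, ζ ∈ ℝ, every smooth u : ℝⁿ → ℂ and every x ∈ ℝⁿ, the grade-four nested commutator satisfies ( [𝒜(ξ), [[𝒜(ν), 𝒜(χ)], 𝒜(ζ)]] u )(x) = 2 ( Δ(g·u)(x) − g(x) Δu(x) ), where g : ℝⁿ → ℝ is the function g(y) = ⟨ e(χ) − e(ν), ∇V₀(y) ⟩; that is, the grade-four commutator equals 2 [Δ, ⟨e(χ)−e(ν), ∇V₀⟩]. -/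
open scoped RealInnerProductSpace

/-- The commutator `[P,Q]u = P(Qu) − Q(Pu)` of operators on functions. -/
def commOp {X : Type*} (P Q : (X → ℂ) → (X → ℂ)) : (X → ℂ) → (X → ℂ) :=
  fun u x => P (Q u) x - Q (P u) x

namespace Grade4Aux

variable {n : ℕ}

local notation "E" => EuclideanSpace ℝ (Fin n)

lemma diffAt {F : Type*} [NormedAddCommGroup F] [NormedSpace ℝ F]
    {f : E → F} (hf : ContDiff ℝ (⊤ : ℕ∞) f) (x : E) : DifferentiableAt ℝ f x :=
  hf.differentiable (by simp) x

lemma contDiff_D {F : Type*} [NormedAddCommGroup F] [NormedSpace ℝ F]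
    {f : E → F} (hf : ContDiff ℝ (⊤ : ℕ∞) f) (w : E) :
    ContDiff ℝ (⊤ : ℕ∞) (fun y => fderiv ℝ f y w) :=
  (ContinuousLinearMap.apply ℝ F w).contDiff.comp (hf.fderiv_right (by simp))

lemma D_add {f g : E → ℂ} (hf : ContDiff ℝ (⊤ : ℕ∞) f) (hg : ContDiff ℝ (⊤ : ℕ∞) g) (w x : E) :
    fderiv ℝ (fun y => f y + g y) x w = fderiv ℝ f x w + fderiv ℝ g x w := by
  rw [fderiv_fun_add (diffAt hf x) (diffAt hg x)]; rfl

lemma D_sub {f g : E → ℂ} (hf : ContDiff ℝ (⊤ : ℕ∞) f) (hg : ContDiff ℝ (⊤ : ℕ∞) g) (w x : E) :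
    fderiv ℝ (fun y => f y - g y) x w = fderiv ℝ f x w - fderiv ℝ g x w := by
  rw [fderiv_fun_sub (diffAt hf x) (diffAt hg x)]; rfl

lemma D_const_mul {f : E → ℂ} (hf : ContDiff ℝ (⊤ : ℕ∞) f) (c : ℂ) (w x : E) :
    fderiv ℝ (fun y => c * f y) x w = c * fderiv ℝ f x w := by
  rw [fderiv_const_mul (diffAt hf x)]; rfl

lemma D_mul {f g : E → ℂ} (hf : ContDiff ℝ (⊤ : ℕ∞) f) (hg : ContDiff ℝ (⊤ : ℕ∞) g) (w x : E) :
    fderiv ℝ (fun y => f y * g y) x w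
      = fderiv ℝ f x w * g x + f x * fderiv ℝ g x w := by
  rw [fderiv_fun_mul (diffAt hf x) (diffAt hg x)]
  simp [smul_eq_mul]
  ring

lemma D_ofReal {f : E → ℝ} (hf : ContDiff ℝ (⊤ : ℕ∞) f) (w x : E) :
    fderiv ℝ (fun y => (f y : ℂ)) x w = ((fderiv ℝ f x w : ℝ) : ℂ) := by
  have h : fderiv ℝ (Complex.ofRealCLM ∘ f) x
      = Complex.ofRealCLM.comp (fderiv ℝ f x) :=
    (Complex.ofRealCLM.hasFDerivAt.comp x (diffAt hf x).hasFDerivAt).fderiv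
  have : (fun y => (f y : ℂ)) = Complex.ofRealCLM ∘ f := rfl
  rw [this, h]; rfl

lemma smooth_ofReal {f : E → ℝ} (hf : ContDiff ℝ (⊤ : ℕ∞) f) :
    ContDiff ℝ (⊤ : ℕ∞) (fun y => (f y : ℂ)) :=
  Complex.ofRealCLM.contDiff.comp hf

lemma smooth_inner (a : E) : ContDiff ℝ (⊤ : ℕ∞) (fun y : E => (⟪a, y⟫ : ℝ)) :=
  ContDiff.inner ℝ contDiff_const contDiff_id

lemma smooth_innerC (a : E) : ContDiff ℝ (⊤ : ℕ∞) (fun y : E => ((⟪a, y⟫ : ℝ) : ℂ)) :=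
  smooth_ofReal (smooth_inner a)

lemma D_inner (a w x : E) :
    fderiv ℝ (fun y : E => ((⟪a, y⟫ : ℝ) : ℂ)) x w = ((⟪a, w⟫ : ℝ) : ℂ) := by
  rw [D_ofReal (smooth_inner a)]
  congr 1
  have h : fderiv ℝ (fun y : E => (⟪a, y⟫ : ℝ)) x = innerSL ℝ a := by
    have : (fun y : E => (⟪a, y⟫ : ℝ)) = ⇑(innerSL ℝ a) := rfl
    rw [this, ContinuousLinearMap.fderiv]
  rw [h]; rfl

lemma D_swap {f : E → ℂ} (hf : ContDiff ℝ (⊤ : ℕ∞) f) (v w x : E) :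
    fderiv ℝ (fun y => fderiv ℝ f y w) x v = fderiv ℝ (fun y => fderiv ℝ f y v) x w := by
  have hd : ∀ y, HasFDerivAt f (fderiv ℝ f y) y := fun y => (diffAt hf y).hasFDerivAt
  have h2 : DifferentiableAt ℝ (fderiv ℝ f) x :=
    ((hf.fderiv_right (m := 1) (by exact WithTop.coe_le_coe.mpr le_top)).differentiable one_ne_zero) x
  have key := second_derivative_symmetric hd h2.hasFDerivAt v w
  have ha : ∀ a : E, fderiv ℝ (fun y => fderiv ℝ f y a) x
      = (ContinuousLinearMap.apply ℝ ℂ a).comp (fderiv ℝ (fderiv ℝ f) x) := by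
    intro a
    have hc := ((ContinuousLinearMap.apply ℝ ℂ a).hasFDerivAt.comp x h2.hasFDerivAt)
    have : (⇑(ContinuousLinearMap.apply ℝ ℂ a) ∘ fderiv ℝ f) = fun y => fderiv ℝ f y a := rfl
    rw [this] at hc
    exact hc.fderiv
  rw [ha w, ha v]
  simpa using key

lemma lap_eq (f : E → ℂ) :
    laplacian f = fun x => ∑ j : Fin n,
      fderiv ℝ (fun y => fderiv ℝ f y (EuclideanSpace.single j 1)) x
        (EuclideanSpace.single j 1) := rfl

lemma lap_smooth {f : E → ℂ} (hf : ContDiff ℝ (⊤ : ℕ∞) f) : ContDiff ℝ (⊤ : ℕ∞) (laplacian f) := by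
  rw [lap_eq]
  exact ContDiff.sum fun j _ => contDiff_D (contDiff_D hf _) _

lemma lap_add {f g : E → ℂ} (hf : ContDiff ℝ (⊤ : ℕ∞) f) (hg : ContDiff ℝ (⊤ : ℕ∞) g) (x : E) :
    laplacian (fun y => f y + g y) x = laplacian f x + laplacian g x := by
  unfold laplacian
  rw [← Finset.sum_add_distrib]
  refine Finset.sum_congr rfl fun j _ => ?_
  have h1 : (fun y => fderiv ℝ (fun z => f z + g z) y (EuclideanSpace.single j 1))
      = fun y => fderiv ℝ f y (EuclideanSpace.single j 1)
          + fderiv ℝ g y (EuclideanSpace.single j 1) :=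
    funext fun y => D_add hf hg _ y
  rw [h1]
  exact D_add (contDiff_D hf _) (contDiff_D hg _) _ x

lemma lap_const_mul {f : E → ℂ} (hf : ContDiff ℝ (⊤ : ℕ∞) f) (c : ℂ) (x : E) :
    laplacian (fun y => c * f y) x = c * laplacian f x := by
  unfold laplacian
  rw [Finset.mul_sum]
  refine Finset.sum_congr rfl fun j _ => ?_
  have h1 : (fun y => fderiv ℝ (fun z => c * f z) y (EuclideanSpace.single j 1))
      = fun y => c * fderiv ℝ f y (EuclideanSpace.single j 1) :=
    funext fun y => D_const_mul hf c _ y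
  rw [h1]
  exact D_const_mul (contDiff_D hf _) c _ x

lemma lap_sub {f g : E → ℂ} (hf : ContDiff ℝ (⊤ : ℕ∞) f) (hg : ContDiff ℝ (⊤ : ℕ∞) g) (x : E) :
    laplacian (fun y => f y - g y) x = laplacian f x - laplacian g x := by
  unfold laplacian
  rw [← Finset.sum_sub_distrib]
  refine Finset.sum_congr rfl fun j _ => ?_
  have h1 : (fun y => fderiv ℝ (fun z => f z - g z) y (EuclideanSpace.single j 1))
      = fun y => fderiv ℝ f y (EuclideanSpace.single j 1)
          - fderiv ℝ g y (EuclideanSpace.single j 1) :=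
    funext fun y => D_sub hf hg _ y
  rw [h1]
  exact D_sub (contDiff_D hf _) (contDiff_D hg _) _ x

lemma sum_single (a : E) : (∑ j : Fin n, a j • EuclideanSpace.single j (1:ℝ)) = a := by
  have h := (EuclideanSpace.basisFun (Fin n) ℝ).sum_repr a
  simpa using h

lemma fderiv_decomp {f : E → ℂ} (hf : ContDiff ℝ (⊤ : ℕ∞) f) (a x : E) :
    ∑ j : Fin n, ((a j : ℝ) : ℂ) * fderiv ℝ f x (EuclideanSpace.single j 1)
      = fderiv ℝ f x a := by
  conv_rhs => rw [← sum_single a]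
  rw [map_sum]
  refine Finset.sum_congr rfl fun j _ => ?_
  rw [ContinuousLinearMap.map_smul]
  simp [Complex.real_smul]

lemma lap_linear_mul (a : E) {f : E → ℂ} (hf : ContDiff ℝ (⊤ : ℕ∞) f) (x : E) :
    laplacian (fun y => ((⟪a, y⟫ : ℝ) : ℂ) * f y) x
      = ((⟪a, x⟫ : ℝ) : ℂ) * laplacian f x + 2 * fderiv ℝ f x a := by
  have key : ∀ j : Fin n,
      fderiv ℝ (fun y => fderiv ℝ (fun z => ((⟪a, z⟫ : ℝ) : ℂ) * f z) y
          (EuclideanSpace.single j 1)) x (EuclideanSpace.single j 1)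
      = 2 * ((a j : ℝ) : ℂ) * fderiv ℝ f x (EuclideanSpace.single j 1)
        + ((⟪a, x⟫ : ℝ) : ℂ) *
          fderiv ℝ (fun y => fderiv ℝ f y (EuclideanSpace.single j 1)) x
            (EuclideanSpace.single j 1) := by
    intro j
    set w : E := EuclideanSpace.single j 1 with hw
    have haw : (⟪a, w⟫ : ℝ) = a j := by
      rw [hw]
      simpa using EuclideanSpace.inner_single_right j (1:ℝ) a
    have h1 : (fun y => fderiv ℝ (fun z => ((⟪a, z⟫ : ℝ) : ℂ) * f z) y w)
        = fun y => ((a j : ℝ) : ℂ) * f y + ((⟪a, y⟫ : ℝ) : ℂ) * fderiv ℝ f y w := by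
      funext y
      rw [D_mul (smooth_innerC a) hf w y, D_inner a w y, haw]
    rw [h1, D_add (contDiff_const.mul hf) ((smooth_innerC a).mul (contDiff_D hf w)) w x,
      D_const_mul hf _ w x, D_mul (smooth_innerC a) (contDiff_D hf w) w x, D_inner a w x, haw]
    ring
  unfold laplacian
  rw [Finset.sum_congr rfl fun j _ => key j, Finset.sum_add_distrib]
  have h2 : ∀ j : Fin n, 2 * ((a j : ℝ) : ℂ) * fderiv ℝ f x (EuclideanSpace.single j 1)
      = 2 * (((a j : ℝ) : ℂ) * fderiv ℝ f x (EuclideanSpace.single j 1)) := fun j => by ring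
  rw [Finset.sum_congr rfl fun j _ => h2 j, ← Finset.mul_sum, fderiv_decomp hf a x,
    ← Finset.mul_sum]
  ring

lemma lap_D_comm {f : E → ℂ} (hf : ContDiff ℝ (⊤ : ℕ∞) f) (v x : E) :
    laplacian (fun y => fderiv ℝ f y v) x = fderiv ℝ (laplacian f) x v := by
  rw [lap_eq f, fderiv_fun_sum (fun j _ =>
    diffAt (contDiff_D (contDiff_D hf _) _) x)]
  rw [ContinuousLinearMap.coe_sum', Finset.sum_apply]
  unfold laplacian
  refine Finset.sum_congr rfl fun j _ => ?_
  have h1 : (fun y => fderiv ℝ (fun z => fderiv ℝ f z v) y (EuclideanSpace.single j 1))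
      = fun y => fderiv ℝ (fun z => fderiv ℝ f z (EuclideanSpace.single j 1)) y v :=
    funext fun y => D_swap hf _ _ y
  rw [h1]
  exact D_swap (contDiff_D hf _) (EuclideanSpace.single j 1) v x

end Grade4Aux

open Grade4Aux

section Main

variable {n : ℕ} (ε : ℝ) (V₀ : EuclideanSpace ℝ (Fin n) → ℝ)
  (e : ℝ → EuclideanSpace ℝ (Fin n))

local notation "E" => EuclideanSpace ℝ (Fin n)

lemma opA_smooth (hV : ContDiff ℝ (⊤ : ℕ∞) V₀) (s : ℝ) {u : E → ℂ} (hu : ContDiff ℝ (⊤ : ℕ∞) u) :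
    ContDiff ℝ (⊤ : ℕ∞) (opA ε V₀ e s u) := by
  unfold opA
  exact (contDiff_const.mul (lap_smooth hu)).sub
    ((contDiff_const.mul ((smooth_ofReal hV).add (smooth_innerC (e s)))).mul hu)

lemma opA_reshape (s : ℝ) (u : E → ℂ) :
    opA ε V₀ e s u = fun y =>
      (Complex.I * (ε : ℂ)) * laplacian u y
        - ((Complex.I * (ε : ℂ)⁻¹) * ((V₀ y : ℂ) * u y)
          + (Complex.I * (ε : ℂ)⁻¹) * (((⟪e s, y⟫ : ℝ) : ℂ) * u y)) := by
  funext y; unfold opA; ring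

lemma lap_opA (hV : ContDiff ℝ (⊤ : ℕ∞) V₀) (s : ℝ) {u : E → ℂ} (hu : ContDiff ℝ (⊤ : ℕ∞) u) (x : E) :
    laplacian (opA ε V₀ e s u) x
      = Complex.I * (ε : ℂ) * laplacian (laplacian u) x
        - (Complex.I * (ε : ℂ)⁻¹ * laplacian (fun y => (V₀ y : ℂ) * u y) x
          + Complex.I * (ε : ℂ)⁻¹ * (((⟪e s, x⟫ : ℝ) : ℂ) * laplacian u x
            + 2 * fderiv ℝ u x (e s))) := by
  rw [opA_reshape]
  rw [lap_sub (contDiff_const.mul (lap_smooth hu))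
    ((contDiff_const.mul ((smooth_ofReal hV).mul hu)).add
      (contDiff_const.mul ((smooth_innerC (e s)).mul hu)))]
  rw [lap_add (contDiff_const.mul ((smooth_ofReal hV).mul hu))
    (contDiff_const.mul ((smooth_innerC (e s)).mul hu))]
  rw [lap_const_mul (lap_smooth hu), lap_const_mul ((smooth_ofReal hV).mul hu),
    lap_const_mul ((smooth_innerC (e s)).mul hu), lap_linear_mul (e s) hu]

lemma D_opA (hV : ContDiff ℝ (⊤ : ℕ∞) V₀) (s : ℝ) {u : E → ℂ} (hu : ContDiff ℝ (⊤ : ℕ∞) u) (v x : E) :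
    fderiv ℝ (opA ε V₀ e s u) x v
      = Complex.I * (ε : ℂ) * fderiv ℝ (laplacian u) x v
        - ((Complex.I * (ε : ℂ)⁻¹)
            * ((((fderiv ℝ V₀ x v : ℝ) : ℂ) * u x + (V₀ x : ℂ) * fderiv ℝ u x v)
              + (((⟪e s, v⟫ : ℝ) : ℂ) * u x + ((⟪e s, x⟫ : ℝ) : ℂ) * fderiv ℝ u x v))) := by
  rw [opA_reshape]
  rw [D_sub (contDiff_const.mul (lap_smooth hu))
    ((contDiff_const.mul ((smooth_ofReal hV).mul hu)).add
      (contDiff_const.mul ((smooth_innerC (e s)).mul hu)))]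
  rw [D_add (contDiff_const.mul ((smooth_ofReal hV).mul hu))
    (contDiff_const.mul ((smooth_innerC (e s)).mul hu))]
  rw [D_const_mul (lap_smooth hu), D_const_mul ((smooth_ofReal hV).mul hu),
    D_const_mul ((smooth_innerC (e s)).mul hu), D_mul (smooth_ofReal hV) hu,
    D_mul (smooth_innerC (e s)) hu, D_ofReal hV, D_inner (e s) v x]
  ring

lemma lemB (hε : ε ≠ 0) (hV : ContDiff ℝ (⊤ : ℕ∞) V₀) (ν χ : ℝ) {u : E → ℂ}
    (hu : ContDiff ℝ (⊤ : ℕ∞) u) (x : E) :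
    commOp (opA ε V₀ e ν) (opA ε V₀ e χ) u x = 2 * fderiv ℝ u x (e χ - e ν) := by
  have hεc : (ε : ℂ) * (ε : ℂ)⁻¹ = 1 :=
    mul_inv_cancel₀ (Complex.ofReal_ne_zero.mpr hε)
  have key : ∀ s t : ℝ, opA ε V₀ e s (opA ε V₀ e t u) x
      = Complex.I * (ε : ℂ) * (Complex.I * (ε : ℂ) * laplacian (laplacian u) x
          - (Complex.I * (ε : ℂ)⁻¹ * laplacian (fun y => (V₀ y : ℂ) * u y) x
            + Complex.I * (ε : ℂ)⁻¹ * (((⟪e t, x⟫ : ℝ) : ℂ) * laplacian u x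
              + 2 * fderiv ℝ u x (e t))))
        - Complex.I * (ε : ℂ)⁻¹ * ((V₀ x : ℂ) + ((⟪e s, x⟫ : ℝ) : ℂ))
            * (Complex.I * (ε : ℂ) * laplacian u x
              - Complex.I * (ε : ℂ)⁻¹ * ((V₀ x : ℂ) + ((⟪e t, x⟫ : ℝ) : ℂ)) * u x) := by
    intro s t
    conv_lhs => rw [show opA ε V₀ e s (opA ε V₀ e t u) x
      = Complex.I * (ε : ℂ) * laplacian (opA ε V₀ e t u) x
        - Complex.I * (ε : ℂ)⁻¹ * ((V₀ x : ℂ) + ((⟪e s, x⟫ : ℝ) : ℂ))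
          * (opA ε V₀ e t u x) from rfl]
    rw [lap_opA ε V₀ e hV t hu x]
    rfl
  show opA ε V₀ e ν (opA ε V₀ e χ u) x - opA ε V₀ e χ (opA ε V₀ e ν u) x = _
  rw [key ν χ, key χ ν, map_sub]
  have hI : Complex.I * Complex.I = -1 := Complex.I_mul_I
  set D : ℂ := fderiv ℝ u x (e χ) - fderiv ℝ u x (e ν) with hD
  linear_combination (-2 * D * (Complex.I * Complex.I)) * hεc + (-2 * D) * hI

lemma lemC (hε : ε ≠ 0) (hV : ContDiff ℝ (⊤ : ℕ∞) V₀) (ν χ ζ : ℝ) {u : E → ℂ}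
    (hu : ContDiff ℝ (⊤ : ℕ∞) u) (x : E) :
    commOp (commOp (opA ε V₀ e ν) (opA ε V₀ e χ)) (opA ε V₀ e ζ) u x
      = (-2) * Complex.I * (ε : ℂ)⁻¹
          * (((fderiv ℝ V₀ x (e χ - e ν) : ℝ) : ℂ)
            + ((⟪e ζ, e χ - e ν⟫ : ℝ) : ℂ)) * u x := by
  have hAu : ContDiff ℝ (⊤ : ℕ∞) (opA ε V₀ e ζ u) := opA_smooth ε V₀ e hV ζ hu
  have hBu : commOp (opA ε V₀ e ν) (opA ε V₀ e χ) u
      = fun y => 2 * fderiv ℝ u y (e χ - e ν) :=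
    funext fun y => lemB ε V₀ e hε hV ν χ hu y
  show commOp (opA ε V₀ e ν) (opA ε V₀ e χ) (opA ε V₀ e ζ u) x
      - opA ε V₀ e ζ (commOp (opA ε V₀ e ν) (opA ε V₀ e χ) u) x = _
  rw [lemB ε V₀ e hε hV ν χ hAu x, hBu, D_opA ε V₀ e hV ζ hu (e χ - e ν) x]
  show _ - (Complex.I * (ε : ℂ)
        * laplacian (fun y => 2 * fderiv ℝ u y (e χ - e ν)) x
      - Complex.I * (ε : ℂ)⁻¹ * ((V₀ x : ℂ) + ((⟪e ζ, x⟫ : ℝ) : ℂ))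
        * (2 * fderiv ℝ u x (e χ - e ν))) = _
  rw [lap_const_mul (contDiff_D hu (e χ - e ν)), lap_D_comm hu (e χ - e ν) x]
  ring

end Main

theorem commutator_grade4 (n : ℕ) (hn : 1 ≤ n) (ε : ℝ) (hε : ε ≠ 0)
    (V₀ : EuclideanSpace ℝ (Fin n) → ℝ) (hV : ContDiff ℝ (⊤ : ℕ∞) V₀)
    (e : ℝ → EuclideanSpace ℝ (Fin n)) (ν χ ξ ζ : ℝ)
    (u : EuclideanSpace ℝ (Fin n) → ℂ) (hu : ContDiff ℝ (⊤ : ℕ∞) u)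
    (x : EuclideanSpace ℝ (Fin n)) :
    commOp (opA ε V₀ e ξ)
        (commOp (commOp (opA ε V₀ e ν) (opA ε V₀ e χ)) (opA ε V₀ e ζ)) u x
      = 2 * (laplacian (fun y => ((⟪e χ - e ν, gradient V₀ y⟫ : ℝ) : ℂ) * u y) x
          - ((⟪e χ - e ν, gradient V₀ x⟫ : ℝ) : ℂ) * laplacian u x) := by
  set v : EuclideanSpace ℝ (Fin n) := e χ - e ν with hv
  have hεc : (ε : ℂ) * (ε : ℂ)⁻¹ = 1 :=
    mul_inv_cancel₀ (Complex.ofReal_ne_zero.mpr hε)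
  have hgrad : ∀ y, (⟪v, gradient V₀ y⟫ : ℝ) = fderiv ℝ V₀ y v := by
    intro y
    rw [real_inner_comm]
    simp [gradient, InnerProductSpace.toDual_symm_apply]
  have hgfun : (fun y => ((⟪v, gradient V₀ y⟫ : ℝ) : ℂ) * u y)
      = fun y => ((fderiv ℝ V₀ y v : ℝ) : ℂ) * u y := by
    funext y; rw [hgrad y]
  have hgsm : ContDiff ℝ (⊤ : ℕ∞) (fun y => ((fderiv ℝ V₀ y v : ℝ) : ℂ)) :=
    smooth_ofReal (contDiff_D hV v)
  have hAu : ContDiff ℝ (⊤ : ℕ∞) (opA ε V₀ e ξ u) := opA_smooth ε V₀ e hV ξ hu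
  set c : ℂ := ((⟪e ζ, v⟫ : ℝ) : ℂ) with hc
  have hCfun : commOp (commOp (opA ε V₀ e ν) (opA ε V₀ e χ)) (opA ε V₀ e ζ) u
      = fun y => (-2) * Complex.I * (ε : ℂ)⁻¹
          * (((fderiv ℝ V₀ y v : ℝ) : ℂ) + c) * u y :=
    funext fun y => lemC ε V₀ e hε hV ν χ ζ hu y
  show opA ε V₀ e ξ (commOp (commOp (opA ε V₀ e ν) (opA ε V₀ e χ)) (opA ε V₀ e ζ) u) x
      - commOp (commOp (opA ε V₀ e ν) (opA ε V₀ e χ)) (opA ε V₀ e ζ) (opA ε V₀ e ξ u) x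
      = _
  rw [hCfun, lemC ε V₀ e hε hV ν χ ζ hAu x]
  show Complex.I * (ε : ℂ)
        * laplacian (fun y => (-2) * Complex.I * (ε : ℂ)⁻¹
            * (((fderiv ℝ V₀ y v : ℝ) : ℂ) + c) * u y) x
      - Complex.I * (ε : ℂ)⁻¹ * ((V₀ x : ℂ) + ((⟪e ξ, x⟫ : ℝ) : ℂ))
        * ((-2) * Complex.I * (ε : ℂ)⁻¹ * (((fderiv ℝ V₀ x v : ℝ) : ℂ) + c) * u x)
      - (-2) * Complex.I * (ε : ℂ)⁻¹ * (((fderiv ℝ V₀ x v : ℝ) : ℂ) + c)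
        * (Complex.I * (ε : ℂ) * laplacian u x
          - Complex.I * (ε : ℂ)⁻¹ * ((V₀ x : ℂ) + ((⟪e ξ, x⟫ : ℝ) : ℂ)) * u x) = _
  have hresh : (fun y => (-2) * Complex.I * (ε : ℂ)⁻¹
        * (((fderiv ℝ V₀ y v : ℝ) : ℂ) + c) * u y)
      = fun y => ((-2) * Complex.I * (ε : ℂ)⁻¹)
          * (((fderiv ℝ V₀ y v : ℝ) : ℂ) * u y)
        + ((-2) * Complex.I * (ε : ℂ)⁻¹ * c) * u y := by
    funext y; ring
  rw [hresh, lap_add (contDiff_const.mul (hgsm.mul hu)) (contDiff_const.mul hu),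
    lap_const_mul (hgsm.mul hu), lap_const_mul hu, hgfun]
  rw [hgrad x]
  have hI : Complex.I * Complex.I = -1 := Complex.I_mul_I
  set S : ℂ := laplacian (fun y => ((fderiv ℝ V₀ y v : ℝ) : ℂ) * u y) x
      - ((fderiv ℝ V₀ x v : ℝ) : ℂ) * laplacian u x with hS
  linear_combination (-2 * S * (Complex.I * Complex.I)) * hεc + (-2 * S) * hI
end

section
/- Let E be a real Banach space, let e : ℝ → E be continuous, and let t, h ∈ ℝ with h ≥ 0. Then ∫₀^h ( ∫₀^ζ ζ ( e(t+ζ) − e(t+χ) ) dχ ) dζ = (1/2) ∫₀^h ( 3ζ² − h² ) e(t+ζ) dζ. -/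
/-!
Write `g ζ = e (t + ζ)`. The inner integral is `ζ² g(ζ) - ζ ∫₀^ζ g`, and integrating the product
of `ζ = (ζ²/2)'` with the primitive of `g` by parts turns `∫₀^h ζ ∫₀^ζ g` into
`∫₀^h ((h² - ζ²)/2) g(ζ) dζ`. What remains is `∫₀^h (ζ² - (h² - ζ²)/2) g(ζ) dζ`.
-/

open MeasureTheory (volume)

namespace intervalIntegral

variable {E : Type*} [NormedAddCommGroup E] [NormedSpace ℝ E] [CompleteSpace E]

theorem integral_smul_const_sub {g : ℝ → E} {a b : ℝ}
    (hg : IntervalIntegrable g volume a b) (c : ℝ) (v : E) :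
    ∫ x in a..b, c • (v - g x) = ((b - a) * c) • v - c • ∫ x in a..b, g x := by
  simp_rw [smul_sub]
  rw [integral_sub (g := fun x => c • g x) intervalIntegrable_const (hg.smul c), integral_const,
    integral_smul, smul_smul]

theorem integral_deriv_smul_primitive {u u' : ℝ → ℝ} {g : ℝ → E} {a b : ℝ}
    (hu : ∀ x ∈ Set.uIcc a b, HasDerivAt u (u' x) x) (hu' : IntervalIntegrable u' volume a b)
    (hg : Continuous g) :
    ∫ x in a..b, u' x • ∫ y in a..x, g y = ∫ x in a..b, (u b - u x) • g x := by
  have hug : IntervalIntegrable (fun x => u x • g x) volume a b :=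
    (ContinuousOn.smul (fun x hx => (hu x hx).continuousAt.continuousWithinAt)
      hg.continuousOn).intervalIntegrable
  have parts := integral_smul_deriv_eq_deriv_smul hu
    (fun x _ => hg.integral_hasStrictDerivAt a x |>.hasDerivAt) hu' (hg.intervalIntegrable a b)
  simp_rw [sub_smul]
  rw [integral_sub (f := fun x => u b • g x) ((hg.intervalIntegrable a b).smul (u b)) hug,
    integral_smul, parts, integral_same, smul_zero, sub_zero, sub_sub_cancel]

end intervalIntegral

open intervalIntegral

theorem theta31_integral_reduction_general {E : Type*} [NormedAddCommGroup E] [NormedSpace ℝ E]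
    [CompleteSpace E] (e : ℝ → E) (he : Continuous e) (t h : ℝ) :
    (∫ ζ in (0:ℝ)..h, ∫ χ in (0:ℝ)..ζ, ζ • (e (t + ζ) - e (t + χ)))
      = (1 / 2 : ℝ) • ∫ ζ in (0:ℝ)..h, (3 * ζ ^ 2 - h ^ 2) • e (t + ζ) := by
  set g : ℝ → E := fun ζ => e (t + ζ)
  have hg : Continuous g := by fun_prop
  have hsq : ∀ x ∈ Set.uIcc 0 h, HasDerivAt (fun x : ℝ => x ^ 2 / 2) x x := fun x _ => by
    simpa using (hasDerivAt_pow 2 x).div_const 2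
  have integrable {f : ℝ → E} (hf : Continuous f) : IntervalIntegrable f volume 0 h :=
    hf.intervalIntegrable 0 h
  calc (∫ ζ in (0:ℝ)..h, ∫ χ in (0:ℝ)..ζ, ζ • (g ζ - g χ))
      = ∫ ζ in (0:ℝ)..h, (ζ ^ 2) • g ζ - ζ • ∫ χ in (0:ℝ)..ζ, g χ := by
        refine integral_congr fun ζ _ => ?_
        rw [integral_smul_const_sub (hg.intervalIntegrable 0 ζ), sub_zero, sq]
    _ = (∫ ζ in (0:ℝ)..h, (ζ ^ 2) • g ζ) - ∫ ζ in (0:ℝ)..h, (h ^ 2 / 2 - ζ ^ 2 / 2) • g ζ := by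
        rw [integral_sub (integrable (by fun_prop)) (integrable (by fun_prop)),
          integral_deriv_smul_primitive hsq intervalIntegrable_id hg]
    _ = ∫ ζ in (0:ℝ)..h, (ζ ^ 2 - (h ^ 2 / 2 - ζ ^ 2 / 2)) • g ζ := by
        rw [← integral_sub (integrable (by fun_prop)) (integrable (by fun_prop))]
        simp_rw [sub_smul]
    _ = (1 / 2 : ℝ) • ∫ ζ in (0:ℝ)..h, (3 * ζ ^ 2 - h ^ 2) • g ζ := by
        rw [← integral_smul]
        refine integral_congr fun ζ _ => ?_
        rw [smul_smul]
        congr 1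
        ring

theorem theta31_integral_reduction {E : Type*} [NormedAddCommGroup E] [NormedSpace ℝ E]
    [CompleteSpace E] (e : ℝ → E) (he : Continuous e) (t h : ℝ) (hh : 0 ≤ h) :
    (∫ ζ in (0:ℝ)..h, ∫ χ in (0:ℝ)..ζ, ζ • (e (t + ζ) - e (t + χ)))
      = (1 / 2 : ℝ) • ∫ ζ in (0:ℝ)..h, (3 * ζ ^ 2 - h ^ 2) • e (t + ζ) :=
  theta31_integral_reduction_general e he t h
end

section
/- Let E be a real Banach space, let e : ℝ → E be continuous, and let t, h ∈ ℝ with h ≥ 0. Then ∫₀^h ( ∫₀^ζ ( ∫₀^ξ ( e(t+χ) − e(t+ξ) ) dχ ) dξ ) dζ = (1/2) ∫₀^h ( 3ζ² − 4hζ + h² ) e(t+ζ) dζ. -/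
/-!
Cauchy's formula for repeated integration, `∫₀^z (z - x)ⁿ • ∫₀^x ψ = ∫₀^z (z - x)ⁿ⁺¹/(n + 1) • ψ`,
is one integration by parts. The innermost integral equals `∫₀^ξ φ - ξ • φ ξ` with
`φ χ = e (t + χ)`; the case `n = 0` of the formula removes the middle integral and the case `n = 1`
the remaining nested one, leaving the weight `(h - ζ)² / 2 - (h - ζ) ζ = (3ζ² - 4hζ + h²) / 2`.
-/

open intervalIntegral

section RepeatedIntegral

variable {E : Type*} [NormedAddCommGroup E] [NormedSpace ℝ E] [CompleteSpace E]
  {ψ : ℝ → E}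

theorem integral_sub_pow_smul_integral (hψ : Continuous ψ) (n : ℕ) (z : ℝ) :
    ∫ x in (0:ℝ)..z, (z - x) ^ n • ∫ y in (0:ℝ)..x, ψ y
      = ∫ x in (0:ℝ)..z, ((z - x) ^ (n + 1) / (n + 1)) • ψ x := by
  have hu : ∀ x, HasDerivAt (fun x : ℝ => -((z - x) ^ (n + 1) / (n + 1))) ((z - x) ^ n) x := by
    intro x
    refine ((((hasDerivAt_id x).const_sub z).fun_pow (n + 1)).div_const ((n : ℝ) + 1)).fun_neg
      |>.congr_deriv ?_
    simp only [id, Nat.add_sub_cancel]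
    push_cast
    field_simp
  have hv : ∀ x, HasDerivAt (fun x => ∫ y in (0:ℝ)..x, ψ y) (ψ x) x := fun x =>
    hψ.integral_hasStrictDerivAt 0 x |>.hasDerivAt
  have hparts := integral_smul_deriv_eq_deriv_smul (a := 0) (b := z) (fun x _ => hu x)
    (fun x _ => hv x) ((by fun_prop : Continuous fun x : ℝ => (z - x) ^ n).intervalIntegrable 0 z)
    (hψ.intervalIntegrable 0 z)
  simp only [sub_self, zero_pow n.succ_ne_zero, zero_div, neg_zero, zero_smul, integral_same,
    smul_zero, sub_zero, zero_sub, neg_smul, integral_neg] at hparts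
  exact (neg_injective hparts).symm

theorem integral_integral_eq_integral_sub_smul (hψ : Continuous ψ) (z : ℝ) :
    ∫ x in (0:ℝ)..z, ∫ y in (0:ℝ)..x, ψ y = ∫ x in (0:ℝ)..z, (z - x) • ψ x := by
  simpa using integral_sub_pow_smul_integral hψ 0 z

end RepeatedIntegral

theorem theta32_integral_reduction_general {E : Type*} [NormedAddCommGroup E] [NormedSpace ℝ E]
    [CompleteSpace E] (e : ℝ → E) (he : Continuous e) (t h : ℝ) :
    (∫ ζ in (0:ℝ)..h, ∫ ξ in (0:ℝ)..ζ, ∫ χ in (0:ℝ)..ξ, (e (t + χ) - e (t + ξ)))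
      = (1 / 2 : ℝ) • ∫ ζ in (0:ℝ)..h, (3 * ζ ^ 2 - 4 * h * ζ + h ^ 2) • e (t + ζ) := by
  have hφ : Continuous fun x => e (t + x) := by fun_prop
  have hF : Continuous fun ξ => ∫ χ in (0:ℝ)..ξ, e (t + χ) :=
    continuous_primitive (hφ.intervalIntegrable) 0
  have hinner : ∀ ξ, ∫ χ in (0:ℝ)..ξ, (e (t + χ) - e (t + ξ))
      = (∫ χ in (0:ℝ)..ξ, e (t + χ)) - ξ • e (t + ξ) := fun ξ => by
    simp [integral_sub (hφ.intervalIntegrable 0 ξ) intervalIntegrable_const]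
  have hg : Continuous fun ξ => (∫ χ in (0:ℝ)..ξ, e (t + χ)) - ξ • e (t + ξ) := by fun_prop
  have hv : Continuous fun x => (h - x) • ∫ χ in (0:ℝ)..x, e (t + χ) := by fun_prop
  have hu : Continuous fun x => ((h - x) ^ 2 / 2) • e (t + x) := by fun_prop
  have hw : Continuous fun x => ((h - x) * x) • e (t + x) := by fun_prop
  have hcauchy : ∫ x in (0:ℝ)..h, (h - x) • ∫ χ in (0:ℝ)..x, e (t + χ)
      = ∫ x in (0:ℝ)..h, ((h - x) ^ 2 / 2) • e (t + x) := by
    simpa [one_add_one_eq_two] using integral_sub_pow_smul_integral hφ 1 h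
  calc _ = ∫ ζ in (0:ℝ)..h, ∫ ξ in (0:ℝ)..ζ, (∫ χ in (0:ℝ)..ξ, e (t + χ)) - ξ • e (t + ξ) := by
        simp_rw [hinner]
    _ = ∫ x in (0:ℝ)..h, (h - x) • ((∫ χ in (0:ℝ)..x, e (t + χ)) - x • e (t + x)) :=
        integral_integral_eq_integral_sub_smul hg h
    _ = (∫ x in (0:ℝ)..h, (h - x) • ∫ χ in (0:ℝ)..x, e (t + χ))
          - ∫ x in (0:ℝ)..h, ((h - x) * x) • e (t + x) := by
        rw [← integral_sub (hv.intervalIntegrable 0 h) (hw.intervalIntegrable 0 h)]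
        congr 1 with x
        module
    _ = _ := by
        rw [hcauchy, ← integral_sub (hu.intervalIntegrable 0 h) (hw.intervalIntegrable 0 h),
          ← integral_smul]
        congr 1 with x
        module

theorem theta32_integral_reduction {E : Type*} [NormedAddCommGroup E] [NormedSpace ℝ E]
    [CompleteSpace E] (e : ℝ → E) (he : Continuous e) (t h : ℝ) (hh : 0 ≤ h) :
    (∫ ζ in (0:ℝ)..h, ∫ ξ in (0:ℝ)..ζ, ∫ χ in (0:ℝ)..ξ, (e (t + χ) - e (t + ξ)))
      = (1 / 2 : ℝ) • ∫ ζ in (0:ℝ)..h, (3 * ζ ^ 2 - 4 * h * ζ + h ^ 2) • e (t + ζ) :=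
  theta32_integral_reduction_general e he t h
end

section
/- Let E be a real Banach space, let e : ℝ → E be continuous, and let t, h ∈ ℝ with h ≥ 0. Then −(1/12) ∫₀^h ζ ( ∫₀^ζ ( ∫₀^χ ( e(t+χ) − e(t+ν) ) dν ) dχ ) dζ = (1/36) ∫₀^h ( 2ζ³ − 3h²ζ + h³ ) e(t+ζ) dζ. -/
/-!
Integrating by parts against a primitive `Φ` of `φ` gives
`∫₀^b φ(x) ∫₀^x g = ∫₀^b (Φ(b) - Φ(y)) g(y) dy`. With `φ = 1` this collapses the two inner
integrals to `∫₀^ζ (2χ - ζ) e(t+χ) dχ`; with `φ(ζ) = 2ζ` and `φ(ζ) = ζ²` it collapses the outer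
one, leaving the polynomial weight `-(1/3) (2χ³ - 3h²χ + h³)`.
-/

open MeasureTheory (volume)
open scoped Interval

namespace intervalIntegral

variable {E : Type*} [NormedAddCommGroup E] [NormedSpace ℝ E] [CompleteSpace E]

theorem integral_smul_integral_eq_integral_sub_smul {φ Φ : ℝ → ℝ} {g : ℝ → E} {a b : ℝ}
    (hΦ : ∀ x ∈ [[a, b]], HasDerivAt Φ (φ x) x) (hφ : IntervalIntegrable φ volume a b)
    (hg : Continuous g) :
    ∫ x in a..b, φ x • ∫ y in a..x, g y = ∫ y in a..b, (Φ b - Φ y) • g y := by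
  have hG : ∀ x ∈ [[a, b]], HasDerivAt (fun x => ∫ y in a..x, g y) (g x) x :=
    fun x _ => (hg.integral_hasStrictDerivAt a x).hasDerivAt
  have hΦbg : IntervalIntegrable (fun y => Φ b • g y) volume a b :=
    (hg.intervalIntegrable a b).smul (Φ b)
  have hΦg : IntervalIntegrable (fun y => Φ y • g y) volume a b :=
    ((HasDerivAt.continuousOn hΦ).smul hg.continuousOn).intervalIntegrable
  have parts := integral_smul_deriv_eq_deriv_smul hΦ hG hφ (hg.intervalIntegrable a b)
  simp_rw [sub_smul]
  rw [integral_sub hΦbg hΦg, integral_smul, parts, integral_same, smul_zero, sub_zero,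
    sub_sub_cancel]

theorem integral_integral_eq_integral_sub_smul {g : ℝ → E} (hg : Continuous g) (a b : ℝ) :
    ∫ x in a..b, ∫ y in a..x, g y = ∫ y in a..b, (b - y) • g y := by
  simpa using integral_smul_integral_eq_integral_sub_smul (φ := 1)
    (fun x _ => hasDerivAt_id x) intervalIntegrable_const hg

theorem integral_integral_sub_eq_integral_smul {f : ℝ → E} (hf : Continuous f) (a b : ℝ) :
    ∫ x in a..b, ∫ y in a..x, (f x - f y) = ∫ x in a..b, (2 * x - a - b) • f x := by
  have inner : ∀ x, ∫ y in a..x, (f x - f y) = (x - a) • f x - ∫ y in a..x, f y := fun x => by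
    rw [integral_sub intervalIntegrable_const (hf.intervalIntegrable a x), integral_const]
  have hL : Continuous fun x => ∫ y in a..x, f y :=
    continuous_primitive (fun _ _ => hf.intervalIntegrable _ _) a
  simp_rw [inner]
  rw [integral_sub, integral_integral_eq_integral_sub_smul hf, ← integral_sub]
  · congr 1 with x
    module
  all_goals exact Continuous.intervalIntegrable (by fun_prop) _ _

theorem integral_smul_integral_two_mul_sub_smul {f : ℝ → E} (hf : Continuous f) (h : ℝ) :
    ∫ z in (0:ℝ)..h, z • ∫ x in (0:ℝ)..z, (2 * x - z) • f x
      = (-(1 / 3) : ℝ) • ∫ x in (0:ℝ)..h, (2 * x ^ 3 - 3 * h ^ 2 * x + h ^ 3) • f x := by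
  have hxf : Continuous fun x : ℝ => x • f x := by fun_prop
  have hK : Continuous fun z => ∫ x in (0:ℝ)..z, x • f x :=
    continuous_primitive (fun _ _ => hxf.intervalIntegrable _ _) 0
  have hL : Continuous fun z => ∫ x in (0:ℝ)..z, f x :=
    continuous_primitive (fun _ _ => hf.intervalIntegrable _ _) 0
  have split : ∀ z : ℝ, z • ∫ x in (0:ℝ)..z, (2 * x - z) • f x
      = (2 * z) • (∫ x in (0:ℝ)..z, x • f x) - z ^ 2 • ∫ x in (0:ℝ)..z, f x := fun z => by
    simp_rw [sub_smul, mul_smul]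
    rw [integral_sub, integral_smul, integral_smul]
    · module
    all_goals exact Continuous.intervalIntegrable (by fun_prop) _ _
  have hsq : ∀ x : ℝ, HasDerivAt (fun z : ℝ => z ^ 2) (2 * x) x := fun x => by
    simpa using hasDerivAt_pow 2 x
  have hcube : ∀ x : ℝ, HasDerivAt (fun z : ℝ => z ^ 3 / 3) (x ^ 2) x := fun x => by
    simpa using (hasDerivAt_pow 3 x).div_const 3
  simp_rw [split]
  rw [integral_sub,
    integral_smul_integral_eq_integral_sub_smul (fun x _ => hsq x)
      (Continuous.intervalIntegrable (by fun_prop) _ _) hxf,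
    integral_smul_integral_eq_integral_sub_smul (fun x _ => hcube x)
      (Continuous.intervalIntegrable (by fun_prop) _ _) hf,
    ← integral_sub, ← integral_smul]
  · congr 1 with x
    module
  all_goals exact Continuous.intervalIntegrable (by fun_prop) _ _

end intervalIntegral

theorem p1_integral_reduction_general {E : Type*} [NormedAddCommGroup E] [NormedSpace ℝ E]
    [CompleteSpace E] (e : ℝ → E) (he : Continuous e) (t h : ℝ) :
    (-(1 / 12 : ℝ)) •
        (∫ ζ in (0:ℝ)..h, ζ • ∫ χ in (0:ℝ)..ζ, ∫ ν in (0:ℝ)..χ, (e (t + χ) - e (t + ν)))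
      = (1 / 36 : ℝ) • ∫ ζ in (0:ℝ)..h, (2 * ζ ^ 3 - 3 * h ^ 2 * ζ + h ^ 3) • e (t + ζ) := by
  have hf : Continuous fun x => e (t + x) := by fun_prop
  have inner := intervalIntegral.integral_integral_sub_eq_integral_smul hf 0
  simp only [sub_zero] at inner
  simp_rw [inner, intervalIntegral.integral_smul_integral_two_mul_sub_smul hf h, smul_smul]
  norm_num

theorem p1_integral_reduction {E : Type*} [NormedAddCommGroup E] [NormedSpace ℝ E]
    [CompleteSpace E] (e : ℝ → E) (he : Continuous e) (t h : ℝ) (hh : 0 ≤ h) :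
    (-(1 / 12 : ℝ)) •
        (∫ ζ in (0:ℝ)..h, ζ • ∫ χ in (0:ℝ)..ζ, ∫ ν in (0:ℝ)..χ, (e (t + χ) - e (t + ν)))
      = (1 / 36 : ℝ) • ∫ ζ in (0:ℝ)..h, (2 * ζ ^ 3 - 3 * h ^ 2 * ζ + h ^ 3) • e (t + ζ) :=
  p1_integral_reduction_general e he t h
end

section
/- Let E be a real Banach space, let e : ℝ → E be continuous, and let t, h ∈ ℝ with h ≥ 0. Then −(1/12) ∫₀^h ( ∫₀^ζ ξ ( ∫₀^ξ ( e(t+ξ) − e(t+ν) ) dν ) dξ ) dζ = (1/72) ∫₀^h ( 8ζ³ − 9hζ² + h³ ) e(t+ζ) dζ. -/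
/-!
Integrating by parts against a primitive gives the exchange rule
`∫ₐᵇ g(x) ∫ₐˣ f = ∫ₐᵇ (∫ₓᵇ g) f(x)`. Applied once to the middle integral and twice to the
outer one, it turns the triple integral into a single integral of a cubic polynomial times
`e (t + ζ)`.
-/

open intervalIntegral

section

variable {E : Type*} [NormedAddCommGroup E] [NormedSpace ℝ E] {f : ℝ → E} {a b : ℝ}

theorem integral_smul_sub_integral_smul {p q : ℝ → ℝ} (hp : Continuous p) (hq : Continuous q)
    (hf : Continuous f) :
    (∫ x in a..b, p x • f x) - ∫ x in a..b, q x • f x = ∫ x in a..b, (p x - q x) • f x := by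
  simp_rw [sub_smul]
  exact (integral_sub ((hp.smul hf).intervalIntegrable a b)
    ((hq.smul hf).intervalIntegrable a b)).symm

variable [CompleteSpace E]

theorem integral_smul_integral_eq_integral_integral_smul {g : ℝ → ℝ} (hg : Continuous g)
    (hf : Continuous f) :
    ∫ x in a..b, g x • ∫ s in a..x, f s = ∫ x in a..b, (∫ s in x..b, g s) • f x := by
  have hu : ∀ x ∈ Set.uIcc a b, HasDerivAt (fun y => ∫ s in y..b, g s) (-g x) x := fun x _ =>
    integral_hasDerivAt_left (hg.intervalIntegrable _ _) (hg.stronglyMeasurableAtFilter _ _)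
      hg.continuousAt
  have hv : ∀ x ∈ Set.uIcc a b, HasDerivAt (fun y => ∫ s in a..y, f s) (f x) x := fun x _ =>
    integral_hasDerivAt_right (hf.intervalIntegrable _ _) (hf.stronglyMeasurableAtFilter _ _)
      hf.continuousAt
  rw [integral_smul_deriv_eq_deriv_smul hu hv (hg.neg.intervalIntegrable _ _)
    (hf.intervalIntegrable _ _)]
  simp [neg_smul]

theorem integral_integral_eq_integral_smul (hf : Continuous f) :
    ∫ x in a..b, ∫ s in a..x, f s = ∫ x in a..b, (b - x) • f x := by
  simpa using integral_smul_integral_eq_integral_integral_smul (a := a) (b := b)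
    (g := fun _ => 1) continuous_const hf

theorem integral_sub_eq_smul_sub_integral (hf : Continuous f) (x : ℝ) :
    ∫ y in a..x, (f x - f y) = (x - a) • f x - ∫ y in a..x, f y := by
  rw [integral_sub intervalIntegrable_const (hf.intervalIntegrable _ _), integral_const]

theorem integral_smul_integral_sub (hf : Continuous f) (ζ : ℝ) :
    ∫ ξ in (0:ℝ)..ζ, ξ • ∫ ν in (0:ℝ)..ξ, (f ξ - f ν)
      = (∫ ξ in (0:ℝ)..ζ, ((3 / 2 : ℝ) * ξ ^ 2) • f ξ) - (ζ ^ 2 / 2) • ∫ ξ in (0:ℝ)..ζ, f ξ := by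
  simp_rw [integral_sub_eq_smul_sub_integral hf, sub_zero, smul_sub, smul_smul]
  rw [integral_sub, integral_smul_integral_eq_integral_integral_smul (g := fun x => x)
    continuous_id hf, ← integral_smul]
  simp_rw [integral_id]
  rw [integral_smul_sub_integral_smul, integral_smul_sub_integral_smul]
  · congr 1 with ξ
    module
  all_goals first | fun_prop | exact Continuous.intervalIntegrable (by fun_prop) _ _

theorem integral_integral_smul_integral_sub (hf : Continuous f) (h : ℝ) :
    ∫ ζ in (0:ℝ)..h, ∫ ξ in (0:ℝ)..ζ, ξ • ∫ ν in (0:ℝ)..ξ, (f ξ - f ν)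
      = ∫ ζ in (0:ℝ)..h, ((3 / 2 : ℝ) * (h - ζ) * ζ ^ 2 - (h ^ 3 - ζ ^ 3) / 6) • f ζ := by
  simp_rw [integral_smul_integral_sub hf]
  rw [integral_sub, integral_integral_eq_integral_smul (by fun_prop),
    integral_smul_integral_eq_integral_integral_smul (by fun_prop) hf]
  simp_rw [integral_div, integral_pow, smul_smul]
  rw [integral_smul_sub_integral_smul]
  · congr 1 with ζ
    module
  all_goals first | fun_prop | exact Continuous.intervalIntegrable (by fun_prop) _ _

end

theorem p2_integral_reduction_general {E : Type*} [NormedAddCommGroup E] [NormedSpace ℝ E]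
    [CompleteSpace E] (e : ℝ → E) (he : Continuous e) (t h : ℝ) :
    (-(1 / 12 : ℝ)) •
        (∫ ζ in (0:ℝ)..h, ∫ ξ in (0:ℝ)..ζ, ξ • ∫ ν in (0:ℝ)..ξ, (e (t + ξ) - e (t + ν)))
      = (1 / 72 : ℝ) • ∫ ζ in (0:ℝ)..h, (8 * ζ ^ 3 - 9 * h * ζ ^ 2 + h ^ 3) • e (t + ζ) := by
  have reduced := integral_integral_smul_integral_sub (f := fun s => e (t + s)) (by fun_prop) h
  beta_reduce at reduced
  rw [reduced, ← integral_smul, ← integral_smul]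
  congr 1 with ζ
  module

theorem p2_integral_reduction {E : Type*} [NormedAddCommGroup E] [NormedSpace ℝ E]
    [CompleteSpace E] (e : ℝ → E) (he : Continuous e) (t h : ℝ) (hh : 0 ≤ h) :
    (-(1 / 12 : ℝ)) •
        (∫ ζ in (0:ℝ)..h, ∫ ξ in (0:ℝ)..ζ, ξ • ∫ ν in (0:ℝ)..ξ, (e (t + ξ) - e (t + ν)))
      = (1 / 72 : ℝ) • ∫ ζ in (0:ℝ)..h, (8 * ζ ^ 3 - 9 * h * ζ ^ 2 + h ^ 3) • e (t + ζ) :=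
  p2_integral_reduction_general e he t h
end

section
/- Let E be a real Banach space, let e : ℝ → E be continuous, and let t, h ∈ ℝ with h ≥ 0. Then (1/4) ∫₀^h ( ∫₀^ζ ( ∫₀^ξ ( ∫₀^χ ( e(t+χ) − e(t+ν) ) dν ) dχ ) dξ ) dζ = (1/24) ∫₀^h ( 4ζ³ − 9hζ² + 6h²ζ − h³ ) e(t+ζ) dζ. -/
/-!
Write `J F x = ∫₀^x F` (`primitive F x`) and `g y = e (t + y)`. The innermost integral is
`χ • g χ - J g χ`, so the left side is `(1/4) • J³(y • g y - J g y)(h)`. Cauchy's formula for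
repeated integration turns this into `(1/8) • ∫₀^h (h - y)² • (y • g y - J g y)`, and one more
integration by parts replaces `∫₀^h (h - y)² • J g y` by `(1/3) • ∫₀^h (h - y)³ • g y`. The
resulting weight `((h - y)² (3y) - (h - y)³) / 24 = (h - y)² (4y - h) / 24` is the cubic on the
right.
-/

open intervalIntegral

section Primitive

variable {E : Type*} [NormedAddCommGroup E] [NormedSpace ℝ E]

noncomputable def primitive (F : ℝ → E) (x : ℝ) : E := ∫ y in (0:ℝ)..x, F y

theorem primitive_zero (F : ℝ → E) : primitive F 0 = 0 := integral_same

variable [CompleteSpace E] {F : ℝ → E}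

theorem hasDerivAt_primitive (hF : Continuous F) (x : ℝ) :
    HasDerivAt (primitive F) (F x) x :=
  (hF.integral_hasStrictDerivAt 0 x).hasDerivAt

@[fun_prop]
theorem Continuous.primitive (hF : Continuous F) : Continuous (primitive F) :=
  continuous_iff_continuousAt.2 fun x => (hasDerivAt_primitive hF x).continuousAt

/-- Integration by parts against `y ↦ -(a - y) ^ (n + 1) / (n + 1)`, whose boundary terms vanish. -/
theorem integral_sub_pow_smul_primitive (hF : Continuous F) (n : ℕ) (a : ℝ) :
    ∫ y in (0:ℝ)..a, (a - y) ^ n • primitive F y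
      = ((n : ℝ) + 1)⁻¹ • ∫ y in (0:ℝ)..a, (a - y) ^ (n + 1) • F y := by
  have hu : ∀ y, HasDerivAt (fun y => -((n : ℝ) + 1)⁻¹ * (a - y) ^ (n + 1)) ((a - y) ^ n) y := by
    intro y
    refine ((((hasDerivAt_id y).const_sub a).fun_pow (n + 1)).const_mul _).congr_deriv ?_
    push_cast
    field_simp
    simp
  have parts := integral_smul_deriv_eq_deriv_smul (a := 0) (b := a) (fun y _ => hu y)
    (fun y _ => hasDerivAt_primitive hF y)
    (((continuous_const.sub continuous_id).pow n).intervalIntegrable _ _) (hF.intervalIntegrable _ _)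
  simp only [sub_self, zero_pow (Nat.succ_ne_zero n), mul_zero, zero_smul, primitive_zero,
    smul_zero, sub_zero, zero_sub, neg_mul, neg_smul, mul_smul, integral_neg, integral_smul,
    neg_inj] at parts
  exact parts.symm

/-- Cauchy's formula for repeated integration. -/
theorem iterate_primitive_eq_integral (n : ℕ) (hF : Continuous F) (a : ℝ) :
    primitive^[n + 1] F a = (n.factorial : ℝ)⁻¹ • ∫ y in (0:ℝ)..a, (a - y) ^ n • F y := by
  induction n generalizing F with
  | zero => simp [primitive]
  | succ n ih =>
    rw [Function.iterate_succ_apply, ih hF.primitive, integral_sub_pow_smul_primitive hF,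
      smul_smul, Nat.factorial_succ]
    push_cast
    rw [mul_inv, mul_comm]

end Primitive

theorem p3_integral_reduction_general {E : Type*} [NormedAddCommGroup E] [NormedSpace ℝ E]
    [CompleteSpace E] (e : ℝ → E) (he : Continuous e) (t h : ℝ) :
    (1 / 4 : ℝ) •
        (∫ ζ in (0:ℝ)..h, ∫ ξ in (0:ℝ)..ζ, ∫ χ in (0:ℝ)..ξ,
          ∫ ν in (0:ℝ)..χ, (e (t + χ) - e (t + ν)))
      = (1 / 24 : ℝ) •
          ∫ ζ in (0:ℝ)..h, (4 * ζ ^ 3 - 9 * h * ζ ^ 2 + 6 * h ^ 2 * ζ - h ^ 3) • e (t + ζ) := by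
  set g : ℝ → E := fun x => e (t + x)
  have hg : Continuous g := he.comp (continuous_const_add t)
  have innermost : (fun χ => ∫ ν in (0:ℝ)..χ, (g χ - g ν)) = fun χ => χ • g χ - primitive g χ := by
    ext χ
    rw [integral_sub intervalIntegrable_const (hg.intervalIntegrable _ _), integral_const,
      sub_zero, primitive]
  have weight : ∀ ζ : ℝ, (4 * ζ ^ 3 - 9 * h * ζ ^ 2 + 6 * h ^ 2 * ζ - h ^ 3) • g ζ
      = (3 : ℝ) • ((h - ζ) ^ 2 • ζ • g ζ) - (h - ζ) ^ 3 • g ζ := fun ζ => by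
    rw [smul_smul, smul_smul, ← sub_smul]; ring_nf
  calc (1 / 4 : ℝ) • (∫ ζ in (0:ℝ)..h, ∫ ξ in (0:ℝ)..ζ, ∫ χ in (0:ℝ)..ξ,
          ∫ ν in (0:ℝ)..χ, (g χ - g ν))
      = (1 / 4 : ℝ) • primitive^[2 + 1] (fun χ => χ • g χ - primitive g χ) h := by
        rw [← innermost]; rfl
    _ = (1 / 8 : ℝ) • ∫ y in (0:ℝ)..h, (h - y) ^ 2 • (y • g y - primitive g y) := by
        rw [iterate_primitive_eq_integral 2 (by fun_prop), smul_smul]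
        norm_num
    _ = (1 / 24 : ℝ) • ((3 : ℝ) • ∫ y in (0:ℝ)..h, (h - y) ^ 2 • y • g y)
          - (1 / 24 : ℝ) • ∫ y in (0:ℝ)..h, (h - y) ^ 3 • g y := by
        simp_rw [smul_sub]
        rw [integral_sub, integral_sub_pow_smul_primitive hg]
        · norm_num; module
        all_goals apply Continuous.intervalIntegrable; fun_prop
    _ = (1 / 24 : ℝ) •
          ∫ ζ in (0:ℝ)..h, (4 * ζ ^ 3 - 9 * h * ζ ^ 2 + 6 * h ^ 2 * ζ - h ^ 3) • g ζ := by
        simp_rw [weight]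
        rw [integral_sub, integral_smul, smul_sub]
        all_goals apply Continuous.intervalIntegrable; fun_prop

theorem p3_integral_reduction {E : Type*} [NormedAddCommGroup E] [NormedSpace ℝ E]
    [CompleteSpace E] (e : ℝ → E) (he : Continuous e) (t h : ℝ) (hh : 0 ≤ h) :
    (1 / 4 : ℝ) •
        (∫ ζ in (0:ℝ)..h, ∫ ξ in (0:ℝ)..ζ, ∫ χ in (0:ℝ)..ξ,
          ∫ ν in (0:ℝ)..χ, (e (t + χ) - e (t + ν)))
      = (1 / 24 : ℝ) •
          ∫ ζ in (0:ℝ)..h, (4 * ζ ^ 3 - 9 * h * ζ ^ 2 + 6 * h ^ 2 * ζ - h ^ 3) • e (t + ζ) :=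
  p3_integral_reduction_general e he t h
end

section
/- Let n ∈ ℕ, t ∈ ℝ, let E be a real Banach space, and let e : ℝ → E be Lipschitz continuous on a neighborhood of t. Let f : ℝ → ℝ → ℝ be such that there exist δ > 0 and C > 0 with: for every h ∈ (0, δ], the function ζ ↦ f(h, ζ) is integrable on [0, h], satisfies ∫₀^h f(h, ζ) dζ = 0, and |f(h, ζ)| ≤ C hⁿ for all ζ ∈ [0, h]. Then the function h ↦ ∫₀^h f(h, ζ) e(t+ζ) dζ is O(h^{n+2}) as h → 0⁺, i.e. there exist constants K > 0 and δ' > 0 such that ‖ ∫₀^h f(h, ζ) e(t+ζ) dζ ‖ ≤ K h^{n+2} for all h ∈ (0, δ']. -/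
/-!
Since `∫₀^h f(h, ζ) dζ = 0`, the value `e t` may be subtracted from `e (t + ζ)` without changing
the integral. What remains is the integral over an interval of length `h` of a function bounded by
`C hⁿ · K h`, where `K` is a Lipschitz constant of `e` near `t`.
-/

open MeasureTheory Set Interval

namespace intervalIntegral

variable {E : Type*} [NormedAddCommGroup E] [NormedSpace ℝ E] [CompleteSpace E]
  {g : ℝ → ℝ} {φ : ℝ → E} {a b : ℝ}

theorem integral_smul_eq_integral_smul_sub_of_integral_eq_zero
    (hg : IntervalIntegrable g volume a b) (hg0 : ∫ x in a..b, g x = 0)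
    (hφ : ContinuousOn φ (uIcc a b)) :
    ∫ x in a..b, g x • φ x = ∫ x in a..b, g x • (φ x - φ a) := by
  have hconst : ∫ x in a..b, g x • φ a = 0 := by
    rw [integral_smul_const, hg0, zero_smul]
  simp only [smul_sub]
  rw [integral_sub (hg.smul_continuousOn hφ)
    (hg.smul_continuousOn continuousOn_const), hconst, sub_zero]

theorem norm_integral_smul_le_of_integral_eq_zero {M : ℝ} {K : NNReal}
    (hab : a ≤ b) (hg : IntervalIntegrable g volume a b) (hg0 : ∫ x in a..b, g x = 0)
    (hgM : ∀ x ∈ Ioc a b, |g x| ≤ M) (hφ : LipschitzOnWith K φ (Icc a b)) :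
    ‖∫ x in a..b, g x • φ x‖ ≤ M * K * (b - a) ^ 2 := by
  rw [integral_smul_eq_integral_smul_sub_of_integral_eq_zero hg hg0
    (by simpa only [uIcc_of_le hab] using hφ.continuousOn)]
  have hbound : ∀ x ∈ Ι a b, ‖g x • (φ x - φ a)‖ ≤ M * (K * (b - a)) := by
    rw [uIoc_of_le hab]
    intro x hx
    have hφx : ‖φ x - φ a‖ ≤ K * (b - a) := by
      calc ‖φ x - φ a‖ ≤ K * ‖x - a‖ :=
            hφ.norm_sub_le (Ioc_subset_Icc_self hx) (left_mem_Icc.2 hab)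
        _ ≤ K * (b - a) := by
          rw [Real.norm_of_nonneg (by linarith [hx.1])]
          exact mul_le_mul_of_nonneg_left (by linarith [hx.2]) K.coe_nonneg
    rw [norm_smul, Real.norm_eq_abs]
    exact mul_le_mul (hgM x hx) hφx (norm_nonneg _) ((abs_nonneg _).trans (hgM x hx))
  calc ‖∫ x in a..b, g x • (φ x - φ a)‖ ≤ M * (K * (b - a)) * |b - a| :=
        norm_integral_le_of_norm_le_const hbound
    _ = M * K * (b - a) ^ 2 := by rw [abs_of_nonneg (sub_nonneg.2 hab)]; ring

end intervalIntegral

theorem zero_mean_gain_of_power (n : ℕ) (t : ℝ) {E : Type*} [NormedAddCommGroup E]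
    [NormedSpace ℝ E] [CompleteSpace E] (e : ℝ → E)
    (he : ∃ U ∈ nhds t, ∃ K : NNReal, LipschitzOnWith K e U)
    (f : ℝ → ℝ → ℝ)
    (hf : ∃ δ > (0:ℝ), ∃ C > (0:ℝ), ∀ h ∈ Set.Ioc (0:ℝ) δ,
      MeasureTheory.IntegrableOn (f h) (Set.Icc 0 h) ∧
      (∫ ζ in (0:ℝ)..h, f h ζ) = 0 ∧
      ∀ ζ ∈ Set.Icc (0:ℝ) h, |f h ζ| ≤ C * h ^ n) :
    ∃ K > (0:ℝ), ∃ δ' > (0:ℝ), ∀ h ∈ Set.Ioc (0:ℝ) δ',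
      ‖∫ ζ in (0:ℝ)..h, f h ζ • e (t + ζ)‖ ≤ K * h ^ (n + 2) := by
  obtain ⟨U, hU, K, he⟩ := he
  obtain ⟨δ, hδ, C, hC, hf⟩ := hf
  obtain ⟨ε, hε, hball⟩ := Metric.nhds_basis_ball.mem_iff.mp hU
  refine ⟨C * (K + 1), by positivity, min δ (ε / 2), by positivity, ?_⟩
  rintro h ⟨hh0, hh⟩
  obtain ⟨hint, hzero, hbd⟩ := hf h ⟨hh0, hh.trans (min_le_left _ _)⟩
  have hmaps : MapsTo (fun ζ => t + ζ) (Icc 0 h) U := fun ζ hζ => hball <| by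
    rw [Metric.mem_ball, Real.dist_eq, add_sub_cancel_left, abs_of_nonneg hζ.1]
    linarith [hζ.2, hh.trans (min_le_right δ (ε / 2))]
  have hlip : LipschitzOnWith K (fun ζ => e (t + ζ)) (Icc 0 h) :=
    .of_dist_le_mul fun x hx y hy => by
      simpa only [dist_add_left] using he.dist_le_mul _ (hmaps hx) _ (hmaps hy)
  calc ‖∫ ζ in (0:ℝ)..h, f h ζ • e (t + ζ)‖ ≤ C * h ^ n * K * (h - 0) ^ 2 :=
        intervalIntegral.norm_integral_smul_le_of_integral_eq_zero hh0.le
          (hint.mono_set (uIcc_of_le hh0.le).subset).intervalIntegrable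
          hzero (fun ζ hζ => hbd ζ (Ioc_subset_Icc_self hζ)) hlip
    _ = C * K * h ^ (n + 2) := by ring
    _ ≤ C * (K + 1) * h ^ (n + 2) := by gcongr; linarith
end

section
/- Let n ≥ 1 be an integer, t ∈ ℝ, let E be a real Banach space, and let e : ℝ → E be Lipschitz continuous on a neighborhood of t. Define μ_n(t,h) = ∫₀^h hⁿ B_n(ζ/h) e(t+ζ) dζ for h > 0, where B_n is the n-th Bernoulli polynomial. Then μ_n(t,h) is O(h^{n+2}) as h → 0⁺, i.e. there exist constants K > 0 and δ > 0 such that ‖μ_n(t,h)‖ ≤ K h^{n+2} for all h ∈ (0, δ]. -/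
/-! Since `∫₀^h hⁿ B_n(ζ/h) dζ = 0`, one may subtract the constant `e t` from `e (t + ζ)` under the
integral. On `[0, h]` the rescaled Bernoulli polynomial is bounded by `M hⁿ` with
`M = max_{[0,1]} |B_n|`, and the Lipschitz bound gives `‖e (t + ζ) - e t‖ ≤ K h`; integrating over an
interval of length `h` yields `M K h^(n+2)`. -/

open MeasureTheory Set

section IntegralAgainstMeanZero

variable {E : Type*} [NormedAddCommGroup E] [NormedSpace ℝ E] [CompleteSpace E]

theorem intervalIntegral.integral_smul_sub_const_of_integral_eq_zero {f : ℝ → ℝ} {g : ℝ → E}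
    {a b : ℝ} (c : E) (hf : IntervalIntegrable f volume a b)
    (hfg : IntervalIntegrable (fun x => f x • g x) volume a b) (hf0 : ∫ x in a..b, f x = 0) :
    ∫ x in a..b, f x • (g x - c) = ∫ x in a..b, f x • g x := by
  simp_rw [smul_sub]
  rw [intervalIntegral.integral_sub (f := fun x => f x • g x) hfg (hf.smul_continuousOn continuousOn_const), intervalIntegral.integral_smul_const,
    hf0, zero_smul, sub_zero]

theorem intervalIntegral.norm_integral_smul_le_of_integral_eq_zero_s14 {f : ℝ → ℝ} {g : ℝ → E} {a b A : ℝ}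
    {K : NNReal} (hab : a ≤ b) (hf : IntervalIntegrable f volume a b)
    (hfA : ∀ x ∈ Icc a b, |f x| ≤ A) (hf0 : ∫ x in a..b, f x = 0)
    (hg : LipschitzOnWith K g (Icc a b)) :
    ‖∫ x in a..b, f x • g x‖ ≤ A * K * (b - a) ^ 2 := by
  have ha : a ∈ Icc a b := left_mem_Icc.mpr hab
  have hfg : IntervalIntegrable (fun x => f x • g x) volume a b :=
    hf.smul_continuousOn (by rw [uIcc_of_le hab]; exact hg.continuousOn)
  have hbound : ∀ x ∈ uIoc a b, ‖f x • (g x - g a)‖ ≤ A * (K * (b - a)) := by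
    intro x hx
    rw [uIoc_of_le hab] at hx
    have hxI : x ∈ Icc a b := Ioc_subset_Icc_self hx
    have hgx : ‖g x - g a‖ ≤ K * (b - a) := by
      rw [← dist_eq_norm]
      refine (hg.dist_le_mul x hxI a ha).trans (mul_le_mul_of_nonneg_left ?_ K.2)
      rw [Real.dist_eq, abs_of_nonneg (by linarith [hx.1])]
      linarith [hx.2]
    rw [norm_smul, Real.norm_eq_abs]
    exact mul_le_mul (hfA x hxI) hgx (norm_nonneg _) ((abs_nonneg _).trans (hfA x hxI))
  calc ‖∫ x in a..b, f x • g x‖ = ‖∫ x in a..b, f x • (g x - g a)‖ := by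
        rw [intervalIntegral.integral_smul_sub_const_of_integral_eq_zero (g a) hf hfg hf0]
    _ ≤ A * (K * (b - a)) * |b - a| := intervalIntegral.norm_integral_le_of_norm_le_const hbound
    _ = A * K * (b - a) ^ 2 := by rw [abs_of_nonneg (sub_nonneg.mpr hab)]; ring

end IntegralAgainstMeanZero

noncomputable def rescaledBernoulli (n : ℕ) (h ζ : ℝ) : ℝ :=
  h ^ n * Polynomial.aeval (ζ / h) (Polynomial.bernoulli n)

theorem continuous_rescaledBernoulli (n : ℕ) (h : ℝ) : Continuous (rescaledBernoulli n h) :=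
  continuous_const.mul ((Polynomial.continuous_aeval _).comp (continuous_id.div_const h))

theorem integral_rescaledBernoulli_eq_zero {n : ℕ} (hn : n ≠ 0) (h : ℝ) :
    ∫ ζ in (0 : ℝ)..h, rescaledBernoulli n h ζ = 0 := by
  rcases eq_or_ne h 0 with rfl | hh
  · exact intervalIntegral.integral_same
  have haeval : ∀ x : ℝ, Polynomial.aeval x (Polynomial.bernoulli n) = bernoulliFun n x := by
    intro x
    rw [bernoulliFun, Polynomial.aeval_def, Polynomial.eval₂_eq_eval_map]
  simp only [rescaledBernoulli, haeval, intervalIntegral.integral_const_mul]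
  rw [intervalIntegral.integral_comp_div _ hh, zero_div, div_self hh,
    integral_bernoulliFun_eq_zero hn, smul_zero, mul_zero]

theorem exists_pos_abs_rescaledBernoulli_le (n : ℕ) :
    ∃ M > 0, ∀ h > 0, ∀ ζ ∈ Icc 0 h, |rescaledBernoulli n h ζ| ≤ M * h ^ n := by
  obtain ⟨M, hM⟩ := isCompact_Icc.exists_bound_of_continuousOn
    (Polynomial.continuous_aeval (Polynomial.bernoulli n) (A := ℝ)).continuousOn
  refine ⟨max M 1, by positivity, fun h hh ζ hζ => ?_⟩
  have hζh : ζ / h ∈ Icc (0 : ℝ) 1 :=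
    ⟨div_nonneg hζ.1 hh.le, (div_le_one hh).mpr hζ.2⟩
  rw [rescaledBernoulli, abs_mul, abs_of_pos (pow_pos hh n), mul_comm (max M 1)]
  exact mul_le_mul_of_nonneg_left ((hM _ hζh).trans (le_max_left _ _)) (pow_nonneg hh.le n)

theorem mu_n_size (n : ℕ) (hn : 1 ≤ n) (t : ℝ) {E : Type*} [NormedAddCommGroup E]
    [NormedSpace ℝ E] [CompleteSpace E] (e : ℝ → E)
    (he : ∃ U ∈ nhds t, ∃ K : NNReal, LipschitzOnWith K e U) :
    ∃ K > (0:ℝ), ∃ δ > (0:ℝ), ∀ h ∈ Set.Ioc (0:ℝ) δ,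
      ‖∫ ζ in (0:ℝ)..h,
          (h ^ n * Polynomial.aeval (ζ / h) (Polynomial.bernoulli n)) • e (t + ζ)‖
        ≤ K * h ^ (n + 2) := by
  obtain ⟨U, hU, K, hK⟩ := he
  obtain ⟨δ, hδ, hδU⟩ := Metric.nhds_basis_closedBall.mem_iff.mp hU
  obtain ⟨M, hM, hBM⟩ := exists_pos_abs_rescaledBernoulli_le n
  refine ⟨M * (K + 1), by positivity, δ, hδ, fun h ⟨hh, hhδ⟩ => ?_⟩
  have hshift : MapsTo (t + ·) (Icc 0 h) U := fun ζ hζ => hδU <| by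
    rw [Metric.mem_closedBall, Real.dist_eq, add_sub_cancel_left, abs_of_nonneg hζ.1]
    exact hζ.2.trans hhδ
  have hLip : LipschitzOnWith K (fun ζ => e (t + ζ)) (Icc 0 h) := by
    simpa only [mul_one, Function.comp_def] using hK.comp (isometry_add_left t).lipschitz.lipschitzOnWith hshift
  calc _ ≤ M * h ^ n * K * (h - 0) ^ 2 :=
        intervalIntegral.norm_integral_smul_le_of_integral_eq_zero_s14 hh.le
          ((continuous_rescaledBernoulli n h).intervalIntegrable _ _) (hBM h hh)
          (integral_rescaledBernoulli_eq_zero (by omega) h) hLip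
    _ ≤ M * (K + 1) * h ^ (n + 2) := by
        rw [sub_zero, pow_add]
        have : 0 ≤ M * h ^ n * h ^ 2 := by positivity
        nlinarith
end

section
/- Let t ∈ ℝ, let E be a real Banach space, and let e : ℝ → E be twice continuously differentiable on a neighborhood of t. Define q(t,h) = ∫₀^h ( ζ² − hζ + h²/6 ) e(t+ζ) dζ for h > 0. Then q(t,h) is O(h⁵) as h → 0⁺, i.e. there exist constants K > 0 and δ > 0 such that ‖q(t,h)‖ ≤ K h⁵ for all h ∈ (0, δ]. (Standard analysis only yields O(h⁴); the extra power comes from the fact that the polynomial ζ² − hζ + h²/6 is even about ζ = h/2, so its first moment about the midpoint vanishes.) -/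
/-!
The weight `ζ ^ 2 - h * ζ + h ^ 2 / 6` is orthogonal on `[0, h]` both to constants and to
`ζ - h / 2` (its primitives `ζ (ζ - h) (2ζ - h) / 6` and `ζ (ζ - h) (3ζ (ζ - h) + h ^ 2) / 12`
vanish at both ends). So `e (t + ζ)` may be replaced in the integral by its first-order Taylor
remainder at the midpoint `t + h / 2`, which is `O(h ^ 2)` because `e'` is Lipschitz near `t`.
The weight is `O(h ^ 2)` and the interval has length `h`, giving `O(h ^ 5)`.
-/

open Set intervalIntegral
open MeasureTheory (volume)

/-- The rescaled second Bernoulli polynomial `h ^ 2 B₂(ζ / h)`. -/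
noncomputable def rescaledBernoulliTwo (h ζ : ℝ) : ℝ := ζ ^ 2 - h * ζ + h ^ 2 / 6

theorem continuous_rescaledBernoulliTwo (h : ℝ) : Continuous (rescaledBernoulliTwo h) := by
  unfold rescaledBernoulliTwo
  fun_prop

theorem integral_rescaledBernoulliTwo (h : ℝ) :
    ∫ ζ in (0:ℝ)..h, rescaledBernoulliTwo h ζ = 0 := by
  have hF (ζ : ℝ) :
      HasDerivAt (fun ζ => ζ * (ζ - h) * (2 * ζ - h) / 6) (rescaledBernoulliTwo h ζ) ζ :=
    (((hasDerivAt_id' ζ).fun_mul ((hasDerivAt_id' ζ).sub_const h)).fun_mul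
      (((hasDerivAt_id' ζ).const_mul 2).sub_const h)).div_const 6 |>.congr_deriv
      (by unfold rescaledBernoulliTwo; ring)
  rw [integral_eq_sub_of_hasDerivAt (fun ζ _ => hF ζ)
    ((continuous_rescaledBernoulliTwo h).intervalIntegrable _ _)]
  ring

theorem integral_rescaledBernoulliTwo_mul_sub_half (h : ℝ) :
    ∫ ζ in (0:ℝ)..h, rescaledBernoulliTwo h ζ * (ζ - h / 2) = 0 := by
  have hF (ζ : ℝ) : HasDerivAt (fun ζ => ζ * (ζ - h) * (3 * ζ * (ζ - h) + h ^ 2) / 12)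
      (rescaledBernoulliTwo h ζ * (ζ - h / 2)) ζ :=
    (((hasDerivAt_id' ζ).fun_mul ((hasDerivAt_id' ζ).sub_const h)).fun_mul
      ((((hasDerivAt_id' ζ).const_mul 3).fun_mul ((hasDerivAt_id' ζ).sub_const h)).add_const
        (h ^ 2))).div_const 12 |>.congr_deriv
      (by unfold rescaledBernoulliTwo; ring)
  rw [integral_eq_sub_of_hasDerivAt (fun ζ _ => hF ζ)
    (((continuous_rescaledBernoulliTwo h).mul (by fun_prop)).intervalIntegrable _ _)]
  ring

theorem abs_rescaledBernoulliTwo_le {h ζ : ℝ} (hζ : ζ ∈ Icc 0 h) :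
    |rescaledBernoulliTwo h ζ| ≤ h ^ 2 / 6 := by
  unfold rescaledBernoulliTwo
  rw [abs_le]
  constructor <;> nlinarith [hζ.1, hζ.2, sq_nonneg (ζ - h / 2)]

section VectorValued

variable {E : Type*} [NormedAddCommGroup E] [NormedSpace ℝ E]

theorem Convex.norm_image_sub_sub_smul_le_of_lipschitzOnWith {f f' : ℝ → E} {s : Set ℝ}
    {K : NNReal} {x y : ℝ} (hs : Convex ℝ s) (hf : ∀ z ∈ s, HasDerivWithinAt f (f' z) s z)
    (hf' : LipschitzOnWith K f' s) (hx : x ∈ s) (hy : y ∈ s) :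
    ‖f y - f x - (y - x) • f' x‖ ≤ K * (y - x) ^ 2 := by
  have hseg : uIcc x y ⊆ s := hs.ordConnected.uIcc_subset hx hy
  set g : ℝ → E := fun z => f z - (z - x) • f' x
  have hg (z) (hz : z ∈ uIcc x y) : HasDerivWithinAt g (f' z - f' x) (uIcc x y) z :=
    ((hf z (hseg hz)).mono hseg).fun_sub
      (((hasDerivAt_id' z).sub_const x).smul_const (f' x)).hasDerivWithinAt |>.congr_deriv
      (by rw [one_smul])
  have hg' (z) (hz : z ∈ uIcc x y) : ‖f' z - f' x‖ ≤ K * |y - x| := by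
    rw [← dist_eq_norm, abs_sub_comm, ← Real.dist_eq]
    calc dist (f' z) (f' x) ≤ K * dist z x := hf'.dist_le_mul z (hseg hz) x hx
      _ ≤ K * dist x y := by
        rw [dist_comm]
        gcongr
        exact Real.dist_left_le_of_mem_uIcc hz
  calc ‖f y - f x - (y - x) • f' x‖ = ‖g y - g x‖ := by simp [g, sub_right_comm]
    _ ≤ K * |y - x| * ‖y - x‖ :=
      (convex_uIcc x y).norm_image_sub_le_of_norm_hasDerivWithin_le hg hg' left_mem_uIcc
        right_mem_uIcc
    _ = K * (y - x) ^ 2 := by rw [Real.norm_eq_abs, mul_assoc, abs_mul_abs_self, sq]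

theorem norm_integral_rescaledBernoulliTwo_smul_le {h C : ℝ} {R : ℝ → E} (hh : 0 ≤ h)
    (hR : ∀ ζ ∈ Icc 0 h, ‖R ζ‖ ≤ C) :
    ‖∫ ζ in (0:ℝ)..h, rescaledBernoulliTwo h ζ • R ζ‖ ≤ h ^ 2 / 6 * C * h := by
  have hbound : ∀ ζ ∈ uIoc 0 h, ‖rescaledBernoulliTwo h ζ • R ζ‖ ≤ h ^ 2 / 6 * C := by
    intro ζ hζ
    rw [uIoc_of_le hh] at hζ
    have hζ' : ζ ∈ Icc 0 h := Ioc_subset_Icc_self hζ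
    rw [norm_smul, Real.norm_eq_abs]
    exact mul_le_mul (abs_rescaledBernoulliTwo_le hζ') (hR ζ hζ') (norm_nonneg _) (by positivity)
  simpa [abs_of_nonneg hh] using norm_integral_le_of_norm_le_const hbound

theorem ContDiffOn.exists_hasDerivAt_lipschitzOnWith_deriv {f : ℝ → E} {U : Set ℝ} {t : ℝ}
    (hU : U ∈ nhds t) (hf : ContDiffOn ℝ 2 f U) :
    ∃ K, ∃ V ∈ nhds t, (∀ x ∈ V, HasDerivAt f (deriv f x) x) ∧ LipschitzOnWith K (deriv f) V := by
  obtain ⟨W, hWU, hWo, htW⟩ := mem_nhds_iff.1 hU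
  have hf₂ : ContDiffOn ℝ 2 f W := hf.mono hWU
  have hf₁ : ContDiffOn ℝ 1 (deriv f) W := hf₂.deriv_of_isOpen hWo (by norm_num)
  obtain ⟨K, V, hV, hlip⟩ := (hf₁.contDiffAt (hWo.mem_nhds htW)).exists_lipschitzOnWith
  refine ⟨K, W ∩ V, Filter.inter_mem (hWo.mem_nhds htW) hV, fun x hx => ?_,
    hlip.mono inter_subset_right⟩
  exact ((hf₂.differentiableOn (by norm_num) x hx.1).differentiableAt
    (hWo.mem_nhds hx.1)).hasDerivAt

variable [CompleteSpace E]

theorem integral_rescaledBernoulliTwo_smul_sub_affine {h : ℝ} {g : ℝ → E}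
    (hg : IntervalIntegrable g volume 0 h) (c v : E) :
    ∫ ζ in (0:ℝ)..h, rescaledBernoulliTwo h ζ • (g ζ - c - (ζ - h / 2) • v) =
      ∫ ζ in (0:ℝ)..h, rescaledBernoulliTwo h ζ • g ζ := by
  have hp := continuous_rescaledBernoulliTwo h
  have hpg : IntervalIntegrable (fun ζ => rescaledBernoulliTwo h ζ • g ζ) volume 0 h :=
    hg.continuousOn_smul hp.continuousOn
  have hpc : IntervalIntegrable (fun ζ => rescaledBernoulliTwo h ζ • c) volume 0 h :=
    (hp.smul continuous_const).intervalIntegrable _ _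
  have hpv : IntervalIntegrable (fun ζ => (rescaledBernoulliTwo h ζ * (ζ - h / 2)) • v)
      volume 0 h :=
    ((hp.mul (by fun_prop)).smul continuous_const).intervalIntegrable _ _
  simp_rw [smul_sub, smul_smul]
  rw [integral_sub (hpg.sub hpc) hpv, integral_sub hpg hpc, intervalIntegral.integral_smul_const,
    intervalIntegral.integral_smul_const, integral_rescaledBernoulliTwo,
    integral_rescaledBernoulliTwo_mul_sub_half, zero_smul, zero_smul, sub_zero, sub_zero]

theorem norm_integral_rescaledBernoulliTwo_smul_le_of_lipschitzOnWith_deriv {f f' : ℝ → E}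
    {K : NNReal} {t h : ℝ} (hh : 0 ≤ h)
    (hf : ∀ x ∈ Icc t (t + h), HasDerivWithinAt f (f' x) (Icc t (t + h)) x)
    (hf' : LipschitzOnWith K f' (Icc t (t + h))) :
    ‖∫ ζ in (0:ℝ)..h, rescaledBernoulliTwo h ζ • f (t + ζ)‖ ≤ K / 24 * h ^ 5 := by
  have hshift {ζ : ℝ} (hζ : ζ ∈ Icc 0 h) : t + ζ ∈ Icc t (t + h) :=
    ⟨by linarith [hζ.1], by linarith [hζ.2]⟩
  have hmid : h / 2 ∈ Icc 0 h := ⟨by linarith, by linarith⟩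
  have hremainder (ζ) (hζ : ζ ∈ Icc 0 h) :
      ‖f (t + ζ) - f (t + h / 2) - (ζ - h / 2) • f' (t + h / 2)‖ ≤ K * (h / 2) ^ 2 := by
    have := (convex_Icc _ _).norm_image_sub_sub_smul_le_of_lipschitzOnWith hf hf'
      (hshift hmid) (hshift hζ)
    rw [add_sub_add_left_eq_sub] at this
    refine this.trans (mul_le_mul_of_nonneg_left (sq_le_sq' ?_ ?_) K.coe_nonneg) <;>
      linarith [hζ.1, hζ.2]
  have hint : IntervalIntegrable (fun ζ => f (t + ζ)) volume 0 h := by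
    refine ContinuousOn.intervalIntegrable ?_
    rw [uIcc_of_le hh]
    exact ContinuousOn.comp (g := f) (fun x hx => (hf x hx).continuousWithinAt) (by fun_prop)
      fun ζ hζ => hshift hζ
  rw [← integral_rescaledBernoulliTwo_smul_sub_affine hint (f (t + h / 2)) (f' (t + h / 2))]
  calc _ ≤ h ^ 2 / 6 * (K * (h / 2) ^ 2) * h :=
        norm_integral_rescaledBernoulliTwo_smul_le hh hremainder
    _ = K / 24 * h ^ 5 := by ring

end VectorValued

theorem q_size (t : ℝ) {E : Type*} [NormedAddCommGroup E]
    [NormedSpace ℝ E] [CompleteSpace E] (e : ℝ → E)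
    (he : ∃ U ∈ nhds t, ContDiffOn ℝ 2 e U) :
    ∃ K > (0:ℝ), ∃ δ > (0:ℝ), ∀ h ∈ Set.Ioc (0:ℝ) δ,
      ‖∫ ζ in (0:ℝ)..h, (ζ ^ 2 - h * ζ + h ^ 2 / 6) • e (t + ζ)‖ ≤ K * h ^ 5 := by
  obtain ⟨U, hU, hC⟩ := he
  obtain ⟨K, V, hV, hderiv, hlip⟩ := hC.exists_hasDerivAt_lipschitzOnWith_deriv hU
  obtain ⟨ε, hε, hball⟩ := Metric.mem_nhds_iff.1 hV
  refine ⟨K / 24 + 1, by positivity, ε / 2, by positivity, fun h ⟨hh0, hhε⟩ => ?_⟩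
  have hsV : Icc t (t + h) ⊆ V := fun x hx => hball <| by
    rw [Metric.mem_ball, Real.dist_eq, abs_lt]
    constructor <;> linarith [hx.1, hx.2]
  calc _ ≤ K / 24 * h ^ 5 :=
        norm_integral_rescaledBernoulliTwo_smul_le_of_lipschitzOnWith_deriv hh0.le
          (fun x hx => (hderiv x (hsV hx)).hasDerivWithinAt) (hlip.mono hsV)
    _ ≤ (K / 24 + 1) * h ^ 5 := by nlinarith [pow_pos hh0 5]
end

section
/- Let n ≥ 1, let e : ℝ → ℝⁿ be continuous, and let t, h ∈ ℝ with h ≥ 0. Define I₁ = ∫₀^h ζ ⟨ e(t+ζ), ∫₀^ζ e(t+ξ) dξ ⟩ dζ. Then ∫₀^h ( ∫₀^ζ ⟨ e(t+ζ) − e(t+ξ), ∫₀^ζ e(t+χ) dχ ⟩ dξ ) dζ = 3 I₁ − h ‖ ∫₀^h e(t+ζ) dζ ‖². -/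
/-! With `F x = ∫ a..x, f`, the inner integral is `(x - a) ⟪f x, F x⟫ - ‖F x‖²`, since integrating
`⟪f ξ, F x⟫` in `ξ` gives `⟪F x, F x⟫`. Integrating by parts against `x - a`, using
`(‖F‖²)' = 2 ⟪F, f⟫`, turns `∫ ‖F‖²` into `(b - a) ‖F b‖² - 2 ∫ (x - a) ⟪f x, F x⟫`. -/

open scoped RealInnerProductSpace
open MeasureTheory intervalIntegral

variable {E : Type*} [NormedAddCommGroup E] [InnerProductSpace ℝ E] [CompleteSpace E]

theorem intervalIntegral.integral_inner_const {f : ℝ → E} {a b : ℝ}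
    (hf : IntervalIntegrable f volume a b) (v : E) :
    ∫ x in a..b, ⟪f x, v⟫ = ⟪∫ x in a..b, f x, v⟫ := by
  simpa only [innerSL_apply_apply, real_inner_comm v] using
    ((innerSL ℝ v).intervalIntegral_comp_comm hf)

theorem integral_inner_sub_primitive {f : ℝ → E} {a x : ℝ}
    (hf : IntervalIntegrable f volume a x) :
    ∫ ξ in a..x, ⟪f x - f ξ, ∫ χ in a..x, f χ⟫
      = (x - a) * ⟪f x, ∫ χ in a..x, f χ⟫ - ‖∫ χ in a..x, f χ‖ ^ 2 := by
  set F := ∫ χ in a..x, f χ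
  have hfF : IntervalIntegrable (fun ξ => ⟪f ξ, F⟫) volume a x :=
    ⟨hf.1.inner_const F, hf.2.inner_const F⟩
  simp only [inner_sub_left]
  rw [intervalIntegral.integral_sub intervalIntegrable_const hfF, intervalIntegral.integral_const,
    integral_inner_const hf, real_inner_self_eq_norm_sq, smul_eq_mul]

theorem integral_norm_sq_primitive {f : ℝ → E} (hf : Continuous f) (a b : ℝ) :
    ∫ x in a..b, ‖∫ ξ in a..x, f ξ‖ ^ 2
      = (b - a) * ‖∫ ξ in a..b, f ξ‖ ^ 2
        - 2 * ∫ x in a..b, (x - a) * ⟪f x, ∫ ξ in a..x, f ξ⟫ := by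
  set F : ℝ → E := fun x => ∫ ξ in a..x, f ξ
  have hF : ∀ x, HasDerivAt F (f x) x := fun x => (hf.integral_hasStrictDerivAt a x).hasDerivAt
  have hFc : Continuous F := continuous_iff_continuousAt.2 fun x => (hF x).continuousAt
  have parts := integral_mul_deriv_eq_deriv_mul (u := fun x => x - a) (v := (‖F ·‖ ^ 2))
    (fun x _ => (hasDerivAt_id x).sub_const a) (fun x _ => (hF x).norm_sq)
    intervalIntegrable_const
    ((continuous_const.mul (hFc.inner hf)).intervalIntegrable a b)
  have hsym : ∀ x, (x - a) * (2 * ⟪F x, f x⟫) = 2 * ((x - a) * ⟪f x, F x⟫) := fun x => by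
    rw [real_inner_comm]; ring
  simp only [hsym, intervalIntegral.integral_const_mul, sub_self, zero_mul, sub_zero, one_mul]
    at parts
  linarith

theorem c31_integral_reduction_general (n : ℕ) (e : ℝ → EuclideanSpace ℝ (Fin n))
    (he : Continuous e) (t h : ℝ) :
    (∫ ζ in (0:ℝ)..h, ∫ ξ in (0:ℝ)..ζ,
        ⟪e (t + ζ) - e (t + ξ), ∫ χ in (0:ℝ)..ζ, e (t + χ)⟫)
      = 3 * (∫ ζ in (0:ℝ)..h, ζ * ⟪e (t + ζ), ∫ ξ in (0:ℝ)..ζ, e (t + ξ)⟫)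
        - h * ‖∫ ζ in (0:ℝ)..h, e (t + ζ)‖ ^ 2 := by
  have hc : Continuous fun ζ => e (t + ζ) := he.comp (continuous_const_add t)
  have hF : Continuous fun ζ => ∫ ξ in (0:ℝ)..ζ, e (t + ξ) :=
    continuous_primitive (fun _ _ => hc.intervalIntegrable _ _) 0
  have hI₁ : Continuous fun ζ => ζ * ⟪e (t + ζ), ∫ ξ in (0:ℝ)..ζ, e (t + ξ)⟫ := by fun_prop
  have hnormF : Continuous fun ζ => ‖∫ ξ in (0:ℝ)..ζ, e (t + ξ)‖ ^ 2 := by fun_prop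
  have hinner : ∀ ζ, (∫ ξ in (0:ℝ)..ζ, ⟪e (t + ζ) - e (t + ξ), ∫ χ in (0:ℝ)..ζ, e (t + χ)⟫)
      = ζ * ⟪e (t + ζ), ∫ ξ in (0:ℝ)..ζ, e (t + ξ)⟫ - ‖∫ ξ in (0:ℝ)..ζ, e (t + ξ)‖ ^ 2 :=
    fun ζ => by simpa only [sub_zero] using integral_inner_sub_primitive (hc.intervalIntegrable 0 ζ)
  have hnorm := integral_norm_sq_primitive hc 0 h
  simp only [sub_zero] at hnorm
  rw [integral_congr fun ζ _ => hinner ζ,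
    intervalIntegral.integral_sub (hI₁.intervalIntegrable 0 h) (hnormF.intervalIntegrable 0 h),
    hnorm]
  ring

theorem c31_integral_reduction (n : ℕ) (hn : 1 ≤ n) (e : ℝ → EuclideanSpace ℝ (Fin n))
    (he : Continuous e) (t h : ℝ) (hh : 0 ≤ h) :
    (∫ ζ in (0:ℝ)..h, ∫ ξ in (0:ℝ)..ζ,
        ⟪e (t + ζ) - e (t + ξ), ∫ χ in (0:ℝ)..ζ, e (t + χ)⟫)
      = 3 * (∫ ζ in (0:ℝ)..h, ζ * ⟪e (t + ζ), ∫ ξ in (0:ℝ)..ζ, e (t + ξ)⟫)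
        - h * ‖∫ ζ in (0:ℝ)..h, e (t + ζ)‖ ^ 2 :=
  c31_integral_reduction_general n e he t h
end

section
/- Let n ≥ 1, let e : ℝ → ℝⁿ be continuous, and let t, h ∈ ℝ with h ≥ 0. Define I₁ = ∫₀^h ζ ⟨ e(t+ζ), ∫₀^ζ e(t+ξ) dξ ⟩ dζ. Then ∫₀^h ⟨ e(t+ζ), ∫₀^ζ ( ∫₀^ξ ( e(t+χ) − e(t+ξ) ) dχ ) dξ ⟩ dζ = 3 I₁ − 2 ⟨ ∫₀^h e(t+ζ) dζ, ∫₀^h ζ e(t+ζ) dζ ⟩. -/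
/-! With `E s = ∫₀^s e(t+ξ)` and `F s = ∫₀^s ξ e(t+ξ)`, the inner integral is `E ξ - ξ e(t+ξ)`,
and integrating by parts once more turns the middle integral into `ζ E ζ - 2 F ζ`.  The left-hand
side is therefore `I₁ - 2 ∫₀^h ⟨e(t+ζ), F ζ⟩`, and the product rule for `s ↦ ⟨E s, F s⟩` gives
`∫₀^h ⟨e(t+ζ), F ζ⟩ = ⟨E h, F h⟩ - I₁`. -/

open scoped RealInnerProductSpace
open intervalIntegral

section Primitive

variable {E : Type*} [NormedAddCommGroup E] [NormedSpace ℝ E] {f : ℝ → E}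

lemma Continuous.continuous_primitive (hf : Continuous f) :
    Continuous fun u => ∫ s in (0:ℝ)..u, f s :=
  intervalIntegral.continuous_primitive (fun _ _ => hf.intervalIntegrable _ _) 0

lemma Continuous.id_smul (hf : Continuous f) : Continuous fun x : ℝ => x • f x :=
  continuous_id.smul hf

variable [CompleteSpace E]

lemma Continuous.hasDerivAt_primitive (hf : Continuous f) (x : ℝ) :
    HasDerivAt (fun u => ∫ s in (0:ℝ)..u, f s) (f x) x :=
  (hf.integral_hasStrictDerivAt 0 x).hasDerivAt

lemma integral_primitive_eq_smul_sub (hf : Continuous f) (s : ℝ) :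
    (∫ ξ in (0:ℝ)..s, ∫ χ in (0:ℝ)..ξ, f χ)
      = s • (∫ ξ in (0:ℝ)..s, f ξ) - ∫ ξ in (0:ℝ)..s, ξ • f ξ := by
  have hderiv : ∀ x ∈ Set.uIcc (0:ℝ) s,
      HasDerivAt (fun u => u • ∫ χ in (0:ℝ)..u, f χ) ((∫ χ in (0:ℝ)..x, f χ) + x • f x) x := by
    intro x _
    convert (hasDerivAt_id' x).fun_smul (hf.hasDerivAt_primitive x) using 1
    rw [one_smul, add_comm]
  have hsum := integral_eq_sub_of_hasDerivAt hderiv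
    ((hf.continuous_primitive.add hf.id_smul).intervalIntegrable 0 s)
  rw [integral_add (hf.continuous_primitive.intervalIntegrable 0 s)
    (hf.id_smul.intervalIntegrable 0 s)] at hsum
  simp only [integral_same, smul_zero, sub_zero] at hsum
  exact eq_sub_of_add_eq hsum

lemma integral_sub_const_eq (hf : Continuous f) (ξ : ℝ) :
    (∫ χ in (0:ℝ)..ξ, (f χ - f ξ)) = (∫ χ in (0:ℝ)..ξ, f χ) - ξ • f ξ := by
  rw [integral_sub (hf.intervalIntegrable 0 ξ) intervalIntegrable_const, integral_const, sub_zero]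

lemma integral_integral_sub_eq (hf : Continuous f) (s : ℝ) :
    (∫ ξ in (0:ℝ)..s, ∫ χ in (0:ℝ)..ξ, (f χ - f ξ))
      = s • (∫ ξ in (0:ℝ)..s, f ξ) - (2:ℝ) • ∫ ξ in (0:ℝ)..s, ξ • f ξ := by
  simp_rw [integral_sub_const_eq hf]
  rw [integral_sub (hf.continuous_primitive.intervalIntegrable 0 s)
      (hf.id_smul.intervalIntegrable 0 s),
    integral_primitive_eq_smul_sub hf, two_smul]
  abel

end Primitive

lemma inner_integral_integral_eq {E : Type*} [NormedAddCommGroup E] [InnerProductSpace ℝ E]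
    [CompleteSpace E] {f g : ℝ → E} (hf : Continuous f) (hg : Continuous g) (h : ℝ) :
    ⟪∫ ζ in (0:ℝ)..h, f ζ, ∫ ζ in (0:ℝ)..h, g ζ⟫
      = ∫ ζ in (0:ℝ)..h, (⟪∫ ξ in (0:ℝ)..ζ, f ξ, g ζ⟫ + ⟪f ζ, ∫ ξ in (0:ℝ)..ζ, g ξ⟫) := by
  have hderiv : ∀ x ∈ Set.uIcc (0:ℝ) h,
      HasDerivAt (fun s => ⟪∫ ξ in (0:ℝ)..s, f ξ, ∫ ξ in (0:ℝ)..s, g ξ⟫)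
        (⟪∫ ξ in (0:ℝ)..x, f ξ, g x⟫ + ⟪f x, ∫ ξ in (0:ℝ)..x, g ξ⟫) x :=
    fun x _ => (hf.hasDerivAt_primitive x).inner ℝ (hg.hasDerivAt_primitive x)
  rw [integral_eq_sub_of_hasDerivAt hderiv
    (((hf.continuous_primitive.inner hg).add (hf.inner hg.continuous_primitive)).intervalIntegrable
      0 h)]
  simp

theorem c32_integral_reduction_general (n : ℕ) (e : ℝ → EuclideanSpace ℝ (Fin n))
    (he : Continuous e) (t h : ℝ) :
    (∫ ζ in (0:ℝ)..h,
        ⟪e (t + ζ), ∫ ξ in (0:ℝ)..ζ, ∫ χ in (0:ℝ)..ξ, (e (t + χ) - e (t + ξ))⟫)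
      = 3 * (∫ ζ in (0:ℝ)..h, ζ * ⟪e (t + ζ), ∫ ξ in (0:ℝ)..ζ, e (t + ξ)⟫)
        - 2 * ⟪∫ ζ in (0:ℝ)..h, e (t + ζ), ∫ ζ in (0:ℝ)..h, ζ • e (t + ζ)⟫ := by
  have hf : Continuous fun ζ : ℝ => e (t + ζ) := he.comp (continuous_const_add t)
  have hI₁ : Continuous fun ζ : ℝ => ζ * ⟪e (t + ζ), ∫ ξ in (0:ℝ)..ζ, e (t + ξ)⟫ :=
    continuous_id.mul (hf.inner hf.continuous_primitive)
  have hI₂ : Continuous fun ζ : ℝ => ⟪e (t + ζ), ∫ ξ in (0:ℝ)..ζ, ξ • e (t + ξ)⟫ :=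
    hf.inner hf.id_smul.continuous_primitive
  have hproduct := inner_integral_integral_eq hf hf.id_smul h
  simp_rw [inner_smul_right, real_inner_comm (e (t + _))] at hproduct
  simp_rw [integral_integral_sub_eq hf, inner_sub_right, real_inner_smul_right]
  rw [integral_sub (hI₁.intervalIntegrable 0 h) ((hI₂.intervalIntegrable 0 h).const_mul 2),
    integral_const_mul, hproduct,
    integral_add (hI₁.intervalIntegrable 0 h) (hI₂.intervalIntegrable 0 h)]
  ring

theorem c32_integral_reduction (n : ℕ) (hn : 1 ≤ n) (e : ℝ → EuclideanSpace ℝ (Fin n))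
    (he : Continuous e) (t h : ℝ) (hh : 0 ≤ h) :
    (∫ ζ in (0:ℝ)..h,
        ⟪e (t + ζ), ∫ ξ in (0:ℝ)..ζ, ∫ χ in (0:ℝ)..ξ, (e (t + χ) - e (t + ξ))⟫)
      = 3 * (∫ ζ in (0:ℝ)..h, ζ * ⟪e (t + ζ), ∫ ξ in (0:ℝ)..ζ, e (t + ξ)⟫)
        - 2 * ⟪∫ ζ in (0:ℝ)..h, e (t + ζ), ∫ ζ in (0:ℝ)..h, ζ • e (t + ζ)⟫ :=
  c32_integral_reduction_general n e he t h
end
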